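/- arXiv:0907.3695 — 5 statements merged into one kernel-verified Lean document; each statement's English description precedes it below -/
import Mathlib

section
/- Let m : (0,∞) → ℝ be continuous and right-differentiable at every point, and suppose that for all t > 0, m'_r(t) + (max{m(t), 0})² ≤ 0, where m'_r denotes the right derivative. Then m(t) ≤ 1/t for all t > 0. -/
open Set Filter Topology

/-!
For `k > 1` and any `b`, the function `k / (x - b)` is a strict supersolution of `u' = -u²` on
`(b, ∞)`, so by the fencing theorem for right derivatives it stays above `m` once it starts
above it. Since it blows up at `b⁺` while `m` is bounded near `b > 0`, it does start above `m`
just to the right of `b`. Hence `m t ≤ (1 + s) / (t - s)` for all `0 < s < t`, and `s → 0⁺`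
gives `m t ≤ 1 / t`.
-/

theorem le_div_sub_of_deriv_right_add_sq_le_zero {m m' : ℝ → ℝ} {a t b k : ℝ} (hk : 1 < k)
    (hba : b < a) (hcont : ContinuousOn m (Icc a t))
    (hderiv : ∀ x ∈ Ico a t, HasDerivWithinAt m (m' x) (Ici x) x)
    (hineq : ∀ x ∈ Ico a t, m' x + max (m x) 0 ^ 2 ≤ 0) (ha : m a ≤ k / (a - b)) :
    ∀ x ∈ Icc a t, m x ≤ k / (x - b) := by
  have hpos : ∀ x ∈ Icc a t, 0 < x - b := fun x hx => by linarith [hx.1]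
  have hbarrier : ∀ x ∈ Icc a t, HasDerivAt (fun y => k / (y - b)) (-(k / (x - b) ^ 2)) x := by
    intro x hx
    simpa [div_eq_mul_inv, neg_div] using
      (((hasDerivAt_id x).sub_const b).inv (hpos x hx).ne').const_mul k
  refine image_le_of_deriv_right_lt_deriv_boundary' hcont hderiv ha
    (fun x hx => (hbarrier x hx).continuousAt.continuousWithinAt)
    (fun x hx => (hbarrier x (Ico_subset_Icc_self hx)).hasDerivWithinAt) ?_
  intro x hx htouch
  have hxb := hpos x (Ico_subset_Icc_self hx)
  have hstrict : k / (x - b) ^ 2 < (k / (x - b)) ^ 2 := by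
    rw [div_pow]
    exact div_lt_div_of_pos_right (by nlinarith) (by positivity)
  have hm : max (m x) 0 = k / (x - b) := by rw [htouch]; exact max_eq_left (by positivity)
  linarith [hineq x hx, hm ▸ hstrict]

theorem exists_mem_Ioo_le_div_sub {m : ℝ → ℝ} {b t k : ℝ} (hbt : b < t) (hk : 0 < k)
    (hm : ContinuousWithinAt m (Ioi b) b) : ∃ a ∈ Ioo b t, m a ≤ k / (a - b) := by
  have hsub : Tendsto (fun x => x - b) (𝓝[>] b) (𝓝[>] 0) :=
    tendsto_nhdsWithin_iff.2
      ⟨((continuous_sub_right b).tendsto' b 0 (sub_self b)).mono_left nhdsWithin_le_nhds,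
        eventually_mem_nhdsWithin.mono fun _ hx => sub_pos.2 (mem_Ioi.1 hx)⟩
  have hblow : Tendsto (fun x => k / (x - b)) (𝓝[>] b) atTop := by
    simpa [div_eq_mul_inv] using (tendsto_inv_nhdsGT_zero.comp hsub).const_mul_atTop hk
  obtain ⟨a, ha, hma, hka⟩ := (Eventually.and (Ioo_mem_nhdsGT hbt)
    ((hm.eventually_lt_const (lt_add_one (m b))).and (hblow.eventually_ge_atTop (m b + 1)))).exists
  exact ⟨a, ha, (show m a < m b + 1 from hma).le.trans hka⟩

/-- If `m : (0,∞) → ℝ` is continuous, right-differentiable at every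
point `t > 0` with right derivative `m' t`, and `m' t + (max (m t) 0)^2 ≤ 0` for all `t > 0`,
then `m t ≤ 1/t` for all `t > 0`. -/
theorem ode_comparison_right_derivative
    (m m' : ℝ → ℝ)
    (hcont : ContinuousOn m (Set.Ioi (0 : ℝ)))
    (hderiv : ∀ t > (0 : ℝ), HasDerivWithinAt m (m' t) (Set.Ioi t) t)
    (hineq : ∀ t > (0 : ℝ), m' t + (max (m t) 0) ^ 2 ≤ 0) :
    ∀ t > (0 : ℝ), m t ≤ 1 / t := by
  intro t ht
  have hbound : ∀ s ∈ Ioo 0 t, m t ≤ (1 + s) / (t - s) := by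
    rintro s ⟨hs, hst⟩
    obtain ⟨a, ⟨hsa, hat⟩, ha⟩ := exists_mem_Ioo_le_div_sub (k := 1 + s) hst (by linarith)
      ((hcont.continuousAt (Ioi_mem_nhds hs)).continuousWithinAt)
    have hIcc : Icc a t ⊆ Ioi 0 := fun x hx => hs.trans (hsa.trans_le hx.1)
    exact le_div_sub_of_deriv_right_add_sq_le_zero (by linarith) hsa (hcont.mono hIcc)
      (fun x hx => (hderiv x (hIcc (Ico_subset_Icc_self hx))).Ici_of_Ioi)
      (fun x hx => hineq x (hIcc (Ico_subset_Icc_self hx))) ha t ⟨hat.le, le_rfl⟩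
  have hlim : Tendsto (fun s => (1 + s) / (t - s)) (𝓝[>] 0) (𝓝 (1 / t)) := by
    have : ContinuousAt (fun s => (1 + s) / (t - s)) 0 :=
      (continuousAt_const.add continuousAt_id).div (continuousAt_const.sub continuousAt_id)
        (by simpa using ht.ne')
    simpa using this.tendsto.mono_left nhdsWithin_le_nhds
  exact ge_of_tendsto hlim (mem_of_superset (Ioo_mem_nhdsGT ht) hbound)
end

section
/- Let λ ∈ (0,1) and let v : ℝ → ℝ be odd, bounded and continuous on ℝ \ {0}, and C¹ on ℝ \ {0}, with v not identically zero. Suppose x* > 0 satisfies v(x*) = max_{x>0} v(x) and v(x*) ≥ 0. Then the fractional Laplacian L_λ[v](x*) := -G_λ ∫_ℝ (v(x*+z) - v(x*))/|z|^{1+λ} dz is strictly positive, where G_λ > 0 is the Lévy-Khintchine normalization constant. -/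
/-!
Substituting `y = xs + z` and pairing `y` with `-y` folds the integral onto `(0, ∞)`. For odd `v`
the folded integrand is `-2 v xs / (y + xs) ^ p + (v y - v xs) (|y - xs| ^ (-p) - (y + xs) ^ (-p))`
with `p = 1 + l`; both terms are `≤ 0` because `v y ≤ v xs` and `|y - xs| < y + xs`. It is `< 0` on
`(0, xs)` if `v xs > 0`, and on the open set `{y > 0 | v y < 0}` if `v xs = 0`; this set is nonempty
because `v` is odd and not `≡ 0`. The integral converges since the increment `v (xs + z) - v xs` is
`O(|z|)` at `0` (this needs `l < 1`) and bounded at infinity (this needs `l > 0`).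
-/

open MeasureTheory Set Topology Metric Asymptotics

section

variable {E F : Type*} [NormedAddCommGroup E] [NormedSpace ℝ E] [FiniteDimensional ℝ E]
  [MeasurableSpace E] [BorelSpace E] [Nontrivial E] [NormedAddCommGroup F]
  {μ : Measure E} [μ.IsAddHaarMeasure]

theorem integrableOn_compl_ball_of_norm_le_rpow {f : E → F} {C α r : ℝ} (hr : 0 < r)
    (hα : Module.finrank ℝ E < α)
    (h_decay : ∀ᵐ x ∂μ.restrict (ball 0 r)ᶜ, ‖f x‖ ≤ C * ‖x‖ ^ (-α))
    (h_meas : AEStronglyMeasurable f μ) :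
    IntegrableOn f (ball 0 r)ᶜ μ := by
  set φ : ℝ → ℝ := (Ici r).indicator fun t ↦ C * t ^ (-α)
  have hφ : IntegrableOn (fun t : ℝ ↦ t ^ (Module.finrank ℝ E - 1) • φ t) (Ioi 0) := by
    have h_rpow : IntegrableOn (fun t : ℝ ↦ C * t ^ ((Module.finrank ℝ E : ℝ) - 1 - α)) (Ici r) :=
      ((integrableOn_Ici_iff_integrableOn_Ioi).mpr
        (integrableOn_Ioi_rpow_of_lt (by linarith) hr)).const_mul C
    refine ((integrable_indicator_iff measurableSet_Ici).mpr h_rpow).integrableOn.congr_fun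
      (fun t (ht : 0 < t) ↦ ?_) measurableSet_Ioi
    by_cases htr : r ≤ t
    · simp only [φ, indicator_of_mem (mem_Ici.mpr htr), smul_eq_mul]
      rw [← Real.rpow_natCast, Nat.cast_sub Module.finrank_pos, Nat.cast_one,
        sub_eq_add_neg _ α, Real.rpow_add ht]
      ring
    · simp [φ, htr]
  rw [← integrable_fun_norm_addHaar μ] at hφ
  refine hφ.integrableOn.mono' h_meas.restrict ?_
  filter_upwards [h_decay, ae_restrict_mem measurableSet_ball.compl] with x hx hxr
  have : r ≤ ‖x‖ := by simpa using hxr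
  simpa [φ, this] using hx

end

theorem integrable_div_abs_rpow_one_add {u : ℝ → ℝ} {l C : ℝ} (hl0 : 0 < l) (hl1 : l < 1)
    (hu : AEStronglyMeasurable u) (hbdd : ∀ z, |u z| ≤ C) (hzero : u =O[𝓝 0] id) :
    Integrable fun z ↦ u z / |z| ^ (1 + l) := by
  obtain ⟨K, hK⟩ := hzero.bound
  obtain ⟨δ, hδ, hδK⟩ := eventually_nhds_iff_ball.mp hK
  have hmeas : AEStronglyMeasurable (fun z ↦ u z / |z| ^ (1 + l)) :=
    (hu.aemeasurable.div (by fun_prop)).aestronglyMeasurable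
  rw [← integrableOn_univ, ← union_compl_self (ball (0 : ℝ) δ)]
  refine (integrableOn_ball_of_norm_le_rpow (C := K) (α := l) (by simp) (by simpa using hl1) ?_
    hmeas).union (integrableOn_compl_ball_of_norm_le_rpow (C := C) (α := 1 + l) hδ
    (by simpa using hl0) ?_ hmeas)
  · filter_upwards [ae_restrict_mem measurableSet_ball] with z hz
    rcases eq_or_ne z 0 with rfl | hz0
    · simp [Real.zero_rpow (by linarith : 1 + l ≠ 0), Real.zero_rpow (neg_ne_zero.mpr hl0.ne')]
    have hpos : 0 < |z| := abs_pos.mpr hz0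
    calc ‖u z / |z| ^ (1 + l)‖ = |u z| / |z| ^ (1 + l) := by
          rw [Real.norm_eq_abs, abs_div, abs_of_nonneg (by positivity : (0 : ℝ) ≤ |z| ^ (1 + l))]
      _ ≤ K * |z| / |z| ^ (1 + l) := by gcongr; simpa using hδK z hz
      _ = K * ‖z‖ ^ (-l) := by
          rw [Real.norm_eq_abs, mul_div_assoc,
            ← Real.rpow_one_sub' hpos.le (by simpa using hl0.ne'), sub_add_cancel_left]
  · filter_upwards [ae_restrict_mem measurableSet_ball.compl] with z hz
    have hpos : 0 < |z| := hδ.trans_le (by simpa using hz)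
    calc ‖u z / |z| ^ (1 + l)‖ = |u z| / |z| ^ (1 + l) := by
          rw [Real.norm_eq_abs, abs_div, abs_of_nonneg (by positivity : (0 : ℝ) ≤ |z| ^ (1 + l))]
      _ ≤ C / |z| ^ (1 + l) := by gcongr; exact hbdd z
      _ = C * ‖z‖ ^ (-(1 + l)) := by rw [Real.norm_eq_abs, Real.rpow_neg hpos.le, div_eq_mul_inv]

theorem ContinuousOn.aestronglyMeasurable_of_compl_singleton {α β : Type*} [TopologicalSpace α]
    [MeasurableSpace α] [OpensMeasurableSpace α] [MeasurableSingletonClass α] [TopologicalSpace β]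
    [SecondCountableTopologyEither α β] [TopologicalSpace.PseudoMetrizableSpace β] {μ : Measure α}
    [NullSingletonClass μ] {f : α → β} {a : α} (hf : ContinuousOn f {a}ᶜ) :
    AEStronglyMeasurable f μ := by
  simpa [restrict_compl_singleton] using
    hf.aestronglyMeasurable (μ := μ) (measurableSet_singleton a).compl

theorem integrable_sub_div_abs_sub_rpow_one_add {v : ℝ → ℝ} {l C x : ℝ} (hl0 : 0 < l)
    (hl1 : l < 1) (hv : AEStronglyMeasurable v) (hbdd : ∀ y, |v y| ≤ C)
    (hd : DifferentiableAt ℝ v x) :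
    Integrable fun y ↦ (v y - v x) / |y - x| ^ (1 + l) := by
  have hu : AEStronglyMeasurable fun z ↦ v (x + z) - v x :=
    (hv.comp_quasiMeasurePreserving (quasiMeasurePreserving_add_left volume x)).sub
      aestronglyMeasurable_const
  have hzero : (fun z ↦ v (x + z) - v x) =O[𝓝 0] id := by
    have h := hd.isBigO_sub.comp_tendsto ((continuous_const_add x).tendsto' 0 x (add_zero x))
    simp only [Function.comp_def, add_sub_cancel_left] at h
    exact h
  have hbdd' : ∀ z, |v (x + z) - v x| ≤ 2 * C := fun z ↦
    (abs_sub _ _).trans (by linarith [hbdd (x + z), hbdd x])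
  simpa using (integrable_div_abs_rpow_one_add hl0 hl1 hu hbdd' hzero).comp_sub_right x

theorem integral_eq_integral_Ioi_comp_neg_add {E : Type*} [NormedAddCommGroup E]
    [NormedSpace ℝ E] {g : ℝ → E} (hg : Integrable g) :
    ∫ y, g y = ∫ y in Ioi 0, (g (-y) + g y) := by
  rw [integral_add hg.comp_neg.integrableOn hg.integrableOn, integral_comp_neg_Ioi, neg_zero,
    ← integral_add_compl measurableSet_Ioi hg, compl_Ioi, add_comm]

theorem setIntegral_neg_of_nonpos_ae {X : Type*} [MeasurableSpace X] {μ : Measure X}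
    {s : Set X} {f : X → ℝ} (hf : f ≤ᵐ[μ.restrict s] 0) (hfi : IntegrableOn f s μ)
    (hneg : 0 < μ ({x | f x < 0} ∩ s)) :
    ∫ x in s, f x ∂μ < 0 := by
  have h := (setIntegral_pos_iff_support_of_nonneg_ae (f := fun x ↦ -f x)
    (by filter_upwards [hf] with x hx; simpa using hx) hfi.neg).mpr
    (hneg.trans_le (measure_mono fun x ⟨hx, hxs⟩ ↦ ⟨by simpa using hx.ne, hxs⟩))
  rw [integral_neg] at h
  linarith

theorem levyKhintchineConstant_pos {l : ℝ} (h0 : 0 < l) (h2 : l < 2) :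
    0 < l * Real.Gamma ((1 + l) / 2) /
      (2 * Real.pi ^ ((1 : ℝ) / 2 + l) * Real.Gamma (1 - l / 2)) := by
  have := Real.Gamma_pos_of_pos (by linarith : 0 < (1 + l) / 2)
  have := Real.Gamma_pos_of_pos (by linarith : 0 < 1 - l / 2)
  have := Real.rpow_pos_of_pos Real.pi_pos ((1 : ℝ) / 2 + l)
  positivity

section Odd

variable {v : ℝ → ℝ}

theorem apply_zero_of_odd (hodd : ∀ x, v (-x) = -v x) : v 0 = 0 := by
  have h := hodd 0
  rw [neg_zero] at h
  linarith

theorem exists_forall_abs_le_of_odd (hodd : ∀ x, v (-x) = -v x)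
    (hbdd : ∃ M, ∀ x, x ≠ 0 → |v x| ≤ M) : ∃ C, ∀ x, |v x| ≤ C := by
  obtain ⟨M, hM⟩ := hbdd
  refine ⟨max M 0, fun x ↦ ?_⟩
  rcases eq_or_ne x 0 with rfl | hx
  · simp [apply_zero_of_odd hodd]
  · exact (hM x hx).trans (le_max_left _ _)

theorem exists_pos_apply_ne_zero_of_odd (hodd : ∀ x, v (-x) = -v x) (hne : v ≠ 0) :
    ∃ y, 0 < y ∧ v y ≠ 0 := by
  obtain ⟨y, hy⟩ := Function.ne_iff.mp hne
  rcases lt_trichotomy y 0 with hy0 | rfl | hy0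
  · exact ⟨-y, neg_pos.mpr hy0, by simpa [hodd] using hy⟩
  · exact absurd (apply_zero_of_odd hodd) hy
  · exact ⟨y, hy0, hy⟩

noncomputable def foldedIncrement (v : ℝ → ℝ) (p x y : ℝ) : ℝ :=
  (v (-y) - v x) / |-y - x| ^ p + (v y - v x) / |y - x| ^ p

variable {p x y : ℝ}

theorem integral_sub_div_abs_rpow_eq_integral_foldedIncrement
    (hg : Integrable fun y ↦ (v y - v x) / |y - x| ^ p) :
    ∫ z, (v (x + z) - v x) / |z| ^ p = ∫ y in Ioi 0, foldedIncrement v p x y :=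
  calc ∫ z, (v (x + z) - v x) / |z| ^ p
    _ = ∫ y, (v y - v x) / |y - x| ^ p := by
      simpa using integral_add_left_eq_self (fun y ↦ (v y - v x) / |y - x| ^ p) x
    _ = _ := integral_eq_integral_Ioi_comp_neg_add hg

theorem foldedIncrement_eq (hodd : ∀ x, v (-x) = -v x) (hxy : 0 ≤ y + x) :
    foldedIncrement v p x y =
      -(2 * v x) / (y + x) ^ p + (v y - v x) * ((|y - x| ^ p)⁻¹ - ((y + x) ^ p)⁻¹) := by
  rw [foldedIncrement, hodd, show |-y - x| = y + x by rw [abs_of_nonpos (by linarith)]; ring]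
  ring

theorem inv_rpow_add_lt_inv_rpow_abs_sub (hp : 0 < p) (hx : 0 < x) (hy : 0 < y) (hyx : y ≠ x) :
    ((y + x) ^ p)⁻¹ < (|y - x| ^ p)⁻¹ := by
  have : 0 < |y - x| := abs_pos.mpr (sub_ne_zero.mpr hyx)
  exact inv_strictAnti₀ (by positivity)
    (Real.rpow_lt_rpow this.le (abs_sub_lt_iff.mpr ⟨by linarith, by linarith⟩) hp)

theorem foldedIncrement_nonpos (hodd : ∀ x, v (-x) = -v x) (hp : 0 < p) (hx : 0 < x)
    (hy : 0 < y) (hyx : y ≠ x) (hvy : v y ≤ v x) (hvx : 0 ≤ v x) :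
    foldedIncrement v p x y ≤ 0 := by
  have := mul_nonpos_of_nonpos_of_nonneg (sub_nonpos.mpr hvy)
    (sub_nonneg.mpr (inv_rpow_add_lt_inv_rpow_abs_sub hp hx hy hyx).le)
  have : -(2 * v x) / (y + x) ^ p ≤ 0 :=
    div_nonpos_of_nonpos_of_nonneg (by linarith) (by positivity)
  rw [foldedIncrement_eq hodd (by linarith)]
  linarith

theorem foldedIncrement_neg_of_lt (hodd : ∀ x, v (-x) = -v x) (hp : 0 < p) (hx : 0 < x)
    (hy : 0 < y) (hyx : y ≠ x) (hvy : v y < v x) (hvx : 0 ≤ v x) :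
    foldedIncrement v p x y < 0 := by
  have := mul_neg_of_neg_of_pos (sub_neg.mpr hvy)
    (sub_pos.mpr (inv_rpow_add_lt_inv_rpow_abs_sub hp hx hy hyx))
  have : -(2 * v x) / (y + x) ^ p ≤ 0 :=
    div_nonpos_of_nonpos_of_nonneg (by linarith) (by positivity)
  rw [foldedIncrement_eq hodd (by linarith)]
  linarith

theorem foldedIncrement_neg_of_pos (hodd : ∀ x, v (-x) = -v x) (hp : 0 < p) (hx : 0 < x)
    (hy : 0 < y) (hyx : y ≠ x) (hvy : v y ≤ v x) (hvx : 0 < v x) :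
    foldedIncrement v p x y < 0 := by
  have := mul_nonpos_of_nonpos_of_nonneg (sub_nonpos.mpr hvy)
    (sub_nonneg.mpr (inv_rpow_add_lt_inv_rpow_abs_sub hp hx hy hyx).le)
  have : -(2 * v x) / (y + x) ^ p < 0 := div_neg_of_neg_of_pos (by linarith) (by positivity)
  rw [foldedIncrement_eq hodd (by linarith)]
  linarith

theorem volume_foldedIncrement_neg_pos (hodd : ∀ x, v (-x) = -v x)
    (hcont : ContinuousOn v {0}ᶜ) (hne : v ≠ 0) (hp : 0 < p) (hx : 0 < x)
    (hmax : ∀ y, 0 < y → v y ≤ v x) (hvx : 0 ≤ v x) :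
    0 < volume ({y | foldedIncrement v p x y < 0} ∩ Ioi 0) := by
  rcases hvx.eq_or_lt with hvx0 | hvx0
  · obtain ⟨y₀, hy₀, hvy₀⟩ := exists_pos_apply_ne_zero_of_odd hodd hne
    have hU : IsOpen (Ioi 0 ∩ v ⁻¹' Iio 0) :=
      (hcont.mono fun y (hy : 0 < y) ↦ hy.ne').isOpen_inter_preimage isOpen_Ioi isOpen_Iio
    have hy₀U : y₀ ∈ Ioi 0 ∩ v ⁻¹' Iio 0 :=
      ⟨hy₀, ((hmax y₀ hy₀).trans_eq hvx0.symm).lt_of_ne hvy₀⟩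
    refine (hU.measure_pos volume ⟨y₀, hy₀U⟩).trans_le (measure_mono fun y ⟨hy, hvy⟩ ↦ ⟨?_, hy⟩)
    have hvy : v y < v x := hvy.trans_eq hvx0
    exact foldedIncrement_neg_of_lt hodd hp hx hy (fun h ↦ (h ▸ hvy).false) hvy hvx
  · refine (isOpen_Ioo.measure_pos volume (nonempty_Ioo.mpr hx)).trans_le
      (measure_mono fun y ⟨hy, hyx⟩ ↦ ⟨?_, hy⟩)
    exact foldedIncrement_neg_of_pos hodd hp hx hy hyx.ne (hmax y hy) hvx0

end Odd

theorem reverse_maximum_principle_odd_general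
    (l : ℝ) (hl : l ∈ Set.Ioo (0 : ℝ) 1)
    (G : ℝ) (hG : G = l * Real.Gamma ((1 + l) / 2) /
      (2 * Real.pi ^ ((1 : ℝ) / 2 + l) * Real.Gamma (1 - l / 2)))
    (v : ℝ → ℝ)
    (hodd : ∀ x : ℝ, v (-x) = -v x)
    (hbdd : ∃ M : ℝ, ∀ x : ℝ, x ≠ 0 → |v x| ≤ M)
    (hC1 : ContDiffOn ℝ 1 v {(0 : ℝ)}ᶜ)
    (hne : v ≠ 0)
    (xs : ℝ) (hxs : 0 < xs)
    (hmax : ∀ x : ℝ, 0 < x → v x ≤ v xs)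
    (hnonneg : 0 ≤ v xs) :
    0 < -G * ∫ z : ℝ, (v (xs + z) - v xs) / |z| ^ (1 + l) := by
  obtain ⟨hl0, hl1⟩ := hl
  have hG0 : 0 < G := hG ▸ levyKhintchineConstant_pos hl0 (by linarith)
  have hcont : ContinuousOn v {0}ᶜ := hC1.continuousOn
  obtain ⟨C, hC⟩ := exists_forall_abs_le_of_odd hodd hbdd
  have hd : DifferentiableAt ℝ v xs :=
    (hC1.differentiableOn one_ne_zero xs hxs.ne').differentiableAt
      (isOpen_compl_singleton.mem_nhds hxs.ne')
  have hg := integrable_sub_div_abs_sub_rpow_one_add hl0 hl1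
    hcont.aestronglyMeasurable_of_compl_singleton hC hd
  have hneg : ∫ y in Ioi 0, foldedIncrement v (1 + l) xs y < 0 := by
    refine setIntegral_neg_of_nonpos_ae ?_ (hg.comp_neg.integrableOn.add hg.integrableOn)
      (volume_foldedIncrement_neg_pos hodd hcont hne (by linarith) hxs hmax hnonneg)
    filter_upwards [ae_restrict_mem measurableSet_Ioi, ae_restrict_of_ae (volume.ae_ne xs)]
      with y hy hyx
    exact foldedIncrement_nonpos hodd (by linarith) hxs hy hyx (hmax y hy) hnonneg
  rw [integral_sub_div_abs_rpow_eq_integral_foldedIncrement hg]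
  exact mul_pos_of_neg_of_neg (neg_neg_of_pos hG0) hneg

/-- positive reverse maximum principle for odd functions.
Let `λ ∈ (0,1)` and let `v : ℝ → ℝ` be odd, bounded and continuous on `ℝ \ {0}`,
`C¹` on `ℝ \ {0}` and not identically zero.  If `x* > 0` satisfies
`v x* = max_{x > 0} v x` and `v x* ≥ 0`, then the fractional Laplacian
`L_λ[v](x*) = -G_λ ∫ (v (x*+z) - v x*)/|z|^{1+λ} dz` is strictly positive, where
`G_λ = λ Γ((1+λ)/2) / (2 π^{1/2+λ} Γ(1-λ/2)) > 0`. -/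
theorem reverse_maximum_principle_odd
    (l : ℝ) (hl : l ∈ Set.Ioo (0 : ℝ) 1)
    (G : ℝ) (hG : G = l * Real.Gamma ((1 + l) / 2) /
      (2 * Real.pi ^ ((1 : ℝ) / 2 + l) * Real.Gamma (1 - l / 2)))
    (v : ℝ → ℝ)
    (hodd : ∀ x : ℝ, v (-x) = -v x)
    (hbdd : ∃ M : ℝ, ∀ x : ℝ, x ≠ 0 → |v x| ≤ M)
    (hcont : ContinuousOn v {(0 : ℝ)}ᶜ)
    (hC1 : ContDiffOn ℝ 1 v {(0 : ℝ)}ᶜ)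
    (hne : v ≠ 0)
    (xs : ℝ) (hxs : 0 < xs)
    (hmax : ∀ x : ℝ, 0 < x → v x ≤ v xs)
    (hnonneg : 0 ≤ v xs) :
    0 < -G * ∫ z : ℝ, (v (xs + z) - v xs) / |z| ^ (1 + l) :=
  reverse_maximum_principle_odd_general l hl G hG v hodd hbdd hC1 hne xs hxs hmax hnonneg
end

section
/- Let λ ∈ (0,1) and let v ∈ H¹(ℝ \ {0}) (i.e. v ∈ L²(ℝ) with v restricted to each half-line in H¹). Then for all R > r > 0, ‖L_λ[v]‖_{L²(ℝ \ [-R,R])} ≤ (2G_λ r^{1-λ}/(1-λ)) ‖∂_x v‖_{L²(ℝ \ [-R+r, R-r])} + (4G_λ/(λ r^λ)) ‖v‖_{L²(ℝ)}. -/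
/-!
Split the `z`-integral defining `L_λ[v](x)` at `|z| = r` and estimate each part in
`L²(ℝ \ [-R, R])` by Minkowski's integral inequality, in the form: if every slice `x ↦ f z x`
has `L²` norm at most `a z * C`, then `x ↦ ∫ f z x dz` has `L²` norm at most `(∫ a) * C`
(a weighted Cauchy–Schwarz inequality in `z`, then Tonelli).

For `|z| ≤ r` and `|x| > R`, the segment from `x` to `x + z` stays in `{|y| > R - r}`, away
from the singularity at `0`, so the fundamental theorem of calculus gives
`‖v(· + z) - v‖ ≤ |z| ‖v'‖_{L²(|y| > R - r)}`; the weight is `|z|^{-λ}`, whose integral over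
`|z| ≤ r` is `2 r^{1-λ} / (1 - λ)`. For `|z| > r` one only uses `‖v(· + z) - v‖ ≤ 2 ‖v‖`; the
weight is `|z|^{-1-λ}`, whose integral over `|z| > r` is `2 r^{-λ} / λ`.
-/

open MeasureTheory Set Function
open scoped ENNReal Interval

theorem sq_eLpNorm_two {α ε : Type*} [MeasurableSpace α] [ENorm ε] (f : α → ε) (μ : Measure α) :
    eLpNorm f 2 μ ^ 2 = ∫⁻ x, ‖f x‖ₑ ^ 2 ∂μ := by
  have h := eLpNorm_nnreal_pow_eq_lintegral (f := f) (μ := μ) (p := 2) two_ne_zero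
  simp only [NNReal.coe_ofNat, ENNReal.rpow_two] at h
  exact_mod_cast h

theorem sqrt_integral_sq_eq_toReal_eLpNorm {α : Type*} [MeasurableSpace α] {μ : Measure α}
    {f : α → ℝ} (hf : AEStronglyMeasurable f μ) :
    √(∫ x, f x ^ 2 ∂μ) = (eLpNorm f 2 μ).toReal := by
  have hsq : ∀ x, ENNReal.ofReal (f x ^ 2) = ‖f x‖ₑ ^ 2 := fun x => by
    rw [← ofReal_norm, ← ENNReal.ofReal_pow (norm_nonneg _), Real.norm_eq_abs, sq_abs]
  rw [integral_eq_lintegral_of_nonneg_ae (.of_forall fun x => sq_nonneg _) (hf.pow 2),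
    lintegral_congr hsq, ← sq_eLpNorm_two, ENNReal.toReal_pow, Real.sqrt_sq ENNReal.toReal_nonneg]

theorem lintegral_sq_le_lintegral_mul_lintegral_sq_div {α : Type*} [MeasurableSpace α]
    {μ : Measure α} {f a : α → ℝ≥0∞} (hf : AEMeasurable f μ) (ha : AEMeasurable a μ)
    (ha0 : ∀ᵐ x ∂μ, a x ≠ 0) (hatop : ∀ᵐ x ∂μ, a x ≠ ∞) :
    (∫⁻ x, f x ∂μ) ^ 2 ≤ (∫⁻ x, a x ∂μ) * ∫⁻ x, f x ^ 2 / a x ∂μ := by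
  -- Hölder with exponents `2, 2` applied to `√a` and `f / √a`.
  set s : α → ℝ≥0∞ := fun x => a x ^ (1 / 2 : ℝ)
  have hs : AEMeasurable s μ := ha.pow_const _
  have hsplit : f =ᵐ[μ] s * (f / s) := by
    filter_upwards [ha0, hatop] with x hx0 hxtop
    exact (ENNReal.mul_div_cancel (by simp [s, hx0]) (by simp [s, hxtop])).symm
  have hs2 : ∀ x, s x ^ (2 : ℝ) = a x := fun x => by
    rw [← ENNReal.rpow_mul]; norm_num
  have hfs2 : ∀ x, (f / s) x ^ (2 : ℝ) = f x ^ 2 / a x := fun x => by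
    rw [Pi.div_apply, ENNReal.div_rpow_of_nonneg _ _ zero_le_two, hs2, ENNReal.rpow_two]
  have holder := ENNReal.lintegral_mul_le_Lp_mul_Lq μ Real.HolderConjugate.two_two hs
    (hf.div hs)
  simp only [hs2, hfs2, ← lintegral_congr_ae hsplit] at holder
  calc (∫⁻ x, f x ∂μ) ^ 2
      ≤ ((∫⁻ x, a x ∂μ) ^ (1 / 2 : ℝ) * (∫⁻ x, f x ^ 2 / a x ∂μ) ^ (1 / 2 : ℝ)) ^ 2 := by
        gcongr
    _ = (∫⁻ x, a x ∂μ) * ∫⁻ x, f x ^ 2 / a x ∂μ := by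
        rw [mul_pow, ← ENNReal.rpow_natCast, ← ENNReal.rpow_mul, ← ENNReal.rpow_natCast,
          ← ENNReal.rpow_mul]
        norm_num

theorem eLpNorm_two_lintegral_le_of_le_mul {α β : Type*} [MeasurableSpace α] [MeasurableSpace β]
    {μ : Measure α} {ν : Measure β} [SFinite μ] [SFinite ν] {f : β → α → ℝ≥0∞}
    (hf : Measurable (uncurry f)) {a : β → ℝ≥0∞} (ha : Measurable a)
    (ha0 : ∀ᵐ z ∂ν, a z ≠ 0) (hatop : ∀ᵐ z ∂ν, a z ≠ ∞) {C : ℝ≥0∞}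
    (hfa : ∀ᵐ z ∂ν, eLpNorm (f z) 2 μ ≤ a z * C) :
    eLpNorm (fun x => ∫⁻ z, f z x ∂ν) 2 μ ≤ (∫⁻ z, a z ∂ν) * C := by
  have hf2 : Measurable (uncurry fun z x => f z x ^ 2 / a z) :=
    (hf.pow_const 2).div (ha.comp measurable_fst)
  rw [← ENNReal.pow_le_pow_left_iff two_ne_zero, sq_eLpNorm_two]
  simp only [enorm_eq_self]
  calc ∫⁻ x, (∫⁻ z, f z x ∂ν) ^ 2 ∂μ
      ≤ ∫⁻ x, (∫⁻ z, a z ∂ν) * ∫⁻ z, f z x ^ 2 / a z ∂ν ∂μ :=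
        lintegral_mono fun x => lintegral_sq_le_lintegral_mul_lintegral_sq_div
          (hf.comp measurable_prodMk_right).aemeasurable ha.aemeasurable ha0 hatop
    _ = (∫⁻ z, a z ∂ν) * ∫⁻ z, (∫⁻ x, f z x ^ 2 ∂μ) / a z ∂ν := by
        rw [lintegral_const_mul _ hf2.lintegral_prod_left,
          lintegral_lintegral_swap hf2.aemeasurable.prod_swap]
        simp_rw [div_eq_mul_inv]
        congr 1
        refine lintegral_congr fun z => ?_
        exact lintegral_mul_const _ ((hf.comp measurable_prodMk_left).pow_const 2)
    _ ≤ (∫⁻ z, a z ∂ν) * ∫⁻ z, a z * C ^ 2 ∂ν := by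
        gcongr 1
        refine lintegral_mono_ae ?_
        filter_upwards [hfa, ha0, hatop] with z hz hz0 hztop
        refine ENNReal.div_le_of_le_mul ?_
        calc ∫⁻ x, f z x ^ 2 ∂μ = eLpNorm (f z) 2 μ ^ 2 := by simp [sq_eLpNorm_two]
          _ ≤ (a z * C) ^ 2 := by gcongr
          _ = a z * C ^ 2 * a z := by ring
    _ = ((∫⁻ z, a z ∂ν) * C) ^ 2 := by
        rw [lintegral_mul_const _ ha]; ring

theorem lintegral_comp_abs (f : ℝ → ℝ≥0∞) : ∫⁻ x, f |x| = 2 * ∫⁻ x in Ioi 0, f x := by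
  have hIic : ∫⁻ x in Iic 0, f |x| = ∫⁻ x in Ioi 0, f x := by
    rw [setLIntegral_congr_fun measurableSet_Iic fun x hx => by rw [abs_of_nonpos hx],
      setLIntegral_congr Ioi_ae_eq_Ici]
    simpa using (Measure.measurePreserving_neg volume).setLIntegral_comp_preimage_emb
      (MeasurableEquiv.neg ℝ).measurableEmbedding f (Ici 0)
  have hIoi : ∫⁻ x in Ioi 0, f |x| = ∫⁻ x in Ioi 0, f x :=
    setLIntegral_congr_fun measurableSet_Ioi fun x hx => by rw [abs_of_pos hx]
  rw [← lintegral_add_compl _ measurableSet_Iic, compl_Iic, hIic, hIoi, two_mul]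

theorem setLIntegral_comp_abs (f : ℝ → ℝ≥0∞) {s : Set ℝ} (hs : MeasurableSet s) :
    ∫⁻ x in abs ⁻¹' s, f |x| = 2 * ∫⁻ x in s ∩ Ioi 0, f x := by
  rw [← setLIntegral_indicator hs, ← lintegral_comp_abs, ← lintegral_indicator (measurable_abs hs)]
  rfl

theorem lintegral_abs_rpow_of_abs_le {s r : ℝ} (hs : -1 < s) (hr : 0 ≤ r) :
    ∫⁻ z in {z : ℝ | |z| ≤ r}, ENNReal.ofReal (|z| ^ s) =
      ENNReal.ofReal (2 * r ^ (s + 1) / (s + 1)) := by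
  have hint : IntegrableOn (fun z : ℝ => z ^ s) (Ioc 0 r) := by
    rw [← intervalIntegrable_iff_integrableOn_Ioc_of_le hr]
    exact intervalIntegral.intervalIntegrable_rpow' hs
  rw [show {z : ℝ | |z| ≤ r} = abs ⁻¹' Iic r from rfl,
    setLIntegral_comp_abs (fun t => ENNReal.ofReal (t ^ s)) measurableSet_Iic,
    Iic_inter_Ioi, ← ofReal_integral_eq_lintegral_ofReal hint, ← intervalIntegral.integral_of_le hr,
    integral_rpow (Or.inl hs), Real.zero_rpow (by linarith), sub_zero, ← ENNReal.ofReal_ofNat 2,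
    ← ENNReal.ofReal_mul zero_le_two, mul_div_assoc]
  filter_upwards [ae_restrict_mem measurableSet_Ioc] with z hz
  exact Real.rpow_nonneg hz.1.le _

theorem lintegral_abs_rpow_of_lt_abs {s r : ℝ} (hs : s < -1) (hr : 0 < r) :
    ∫⁻ z in {z : ℝ | r < |z|}, ENNReal.ofReal (|z| ^ s) =
      ENNReal.ofReal (-2 * r ^ (s + 1) / (s + 1)) := by
  rw [show {z : ℝ | r < |z|} = abs ⁻¹' Ioi r from rfl,
    setLIntegral_comp_abs (fun t => ENNReal.ofReal (t ^ s)) measurableSet_Ioi,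
    Ioi_inter_Ioi, sup_eq_left.2 hr.le,
    ← ofReal_integral_eq_lintegral_ofReal (integrableOn_Ioi_rpow_of_lt hs hr),
    integral_Ioi_rpow_of_lt hs hr, ← ENNReal.ofReal_ofNat 2, ← ENNReal.ofReal_mul zero_le_two]
  · ring_nf
  filter_upwards [ae_restrict_mem measurableSet_Ioi] with z hz
  exact Real.rpow_nonneg (hr.trans hz).le _

theorem preimage_const_add_uIoc (x a b : ℝ) : (x + ·) ⁻¹' Ι a b = Ι (a - x) (b - x) := by
  simp only [uIoc, preimage_const_add_Ioc, min_sub_sub_right, max_sub_sub_right]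

theorem setLIntegral_uIoc_comp_const_add (g : ℝ → ℝ≥0∞) (x z : ℝ) :
    ∫⁻ t in Ι 0 z, g (x + t) = ∫⁻ s in Ι x (x + z), g s := by
  simpa [preimage_const_add_uIoc] using
    (measurePreserving_add_left volume x).setLIntegral_comp_preimage_emb
      (measurableEmbedding_addLeft x) g (Ι x (x + z))

theorem setLIntegral_comp_add_right_le (g : ℝ → ℝ≥0∞) {A A' : Set ℝ} {t : ℝ}
    (hAA' : ∀ x ∈ A, x + t ∈ A') :
    ∫⁻ x in A, g (x + t) ≤ ∫⁻ s in A', g s := by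
  rw [← (measurePreserving_add_right volume t).setLIntegral_comp_preimage_emb
    (measurableEmbedding_addRight t) g A']
  exact lintegral_mono_set hAA'

theorem enorm_sub_sq_le_mul_setLIntegral_uIoc {v v' : ℝ → ℝ} {a b : ℝ}
    (hderiv : ∀ x ∈ [[a, b]], HasDerivAt v (v' x) x) (hint : IntervalIntegrable v' volume a b) :
    ‖v b - v a‖ₑ ^ 2 ≤ ENNReal.ofReal |b - a| * ∫⁻ x in Ι a b, ‖v' x‖ₑ ^ 2 := by
  have hftc : ‖v b - v a‖ₑ ≤ ∫⁻ x in Ι a b, ‖v' x‖ₑ := by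
    rw [← intervalIntegral.integral_eq_sub_of_hasDerivAt hderiv hint, ← ofReal_norm,
      intervalIntegral.norm_integral_eq_norm_integral_uIoc, ofReal_norm]
    exact enorm_integral_le_lintegral_enorm _
  have hcs := lintegral_sq_le_lintegral_mul_lintegral_sq_div (a := fun _ => 1)
    hint.def'.aestronglyMeasurable.enorm aemeasurable_const (by simp) (by simp)
  simp only [lintegral_const, Measure.restrict_apply MeasurableSet.univ, univ_inter,
    Real.volume_uIoc, one_mul, div_one] at hcs
  exact (pow_le_pow_left' hftc 2).trans hcs

theorem lintegral_setLIntegral_uIoc_add_le {g : ℝ → ℝ≥0∞} (hg : AEMeasurable g) {A A' : Set ℝ}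
    {z : ℝ} (hAA' : ∀ x ∈ A, Ι x (x + z) ⊆ A') :
    ∫⁻ x in A, ∫⁻ s in Ι x (x + z), g s ≤ ENNReal.ofReal |z| * ∫⁻ s in A', g s := by
  obtain ⟨g', hg'm, hgg'⟩ := hg
  have hcongr : ∀ S : Set ℝ, ∫⁻ s in S, g s = ∫⁻ s in S, g' s := fun S =>
    lintegral_congr_ae (ae_restrict_of_ae hgg')
  simp only [hcongr, ← setLIntegral_uIoc_comp_const_add]
  rw [lintegral_lintegral_swap (f := fun x t => g' (x + t))
    (hg'm.comp measurable_add).aemeasurable]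
  calc ∫⁻ t in Ι 0 z, ∫⁻ x in A, g' (x + t)
      ≤ ∫⁻ t in Ι 0 z, ∫⁻ s in A', g' s :=
        setLIntegral_mono' measurableSet_uIoc fun t ht =>
          setLIntegral_comp_add_right_le g' fun x hx => by
            refine hAA' x hx ?_
            rw [← mem_preimage (f := (x + ·)), preimage_const_add_uIoc]
            simpa using ht
    _ = ENNReal.ofReal |z| * ∫⁻ s in A', g' s := by
        rw [setLIntegral_const, Real.volume_uIoc, sub_zero, mul_comm]

theorem eLpNorm_comp_add_right_sub_self_le {v v' : ℝ → ℝ} {A A' : Set ℝ} (hA : MeasurableSet A)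
    {z : ℝ} (hderiv : ∀ x ∈ A', HasDerivAt v (v' x) x) (hv' : LocallyIntegrable v')
    (hAA' : ∀ x ∈ A, [[x, x + z]] ⊆ A') :
    eLpNorm (fun x => v (x + z) - v x) 2 (volume.restrict A) ≤
      ENNReal.ofReal |z| * eLpNorm v' 2 (volume.restrict A') := by
  rw [← ENNReal.pow_le_pow_left_iff two_ne_zero, mul_pow, sq_eLpNorm_two, sq_eLpNorm_two]
  calc ∫⁻ x in A, ‖v (x + z) - v x‖ₑ ^ 2
      ≤ ∫⁻ x in A, ENNReal.ofReal |z| * ∫⁻ s in Ι x (x + z), ‖v' s‖ₑ ^ 2 :=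
        setLIntegral_mono' hA fun x hx => by
          simpa using enorm_sub_sq_le_mul_setLIntegral_uIoc (fun y hy => hderiv y (hAA' x hx hy))
            (hv'.integrableOn_isCompact isCompact_uIcc).intervalIntegrable
    _ = ENNReal.ofReal |z| * ∫⁻ x in A, ∫⁻ s in Ι x (x + z), ‖v' s‖ₑ ^ 2 :=
        lintegral_const_mul' _ _ ENNReal.ofReal_ne_top
    _ ≤ ENNReal.ofReal |z| * (ENNReal.ofReal |z| * ∫⁻ s in A', ‖v' s‖ₑ ^ 2) := by
        gcongr
        exact lintegral_setLIntegral_uIoc_add_le (hv'.aestronglyMeasurable.enorm.pow_const 2)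
          fun x hx => uIoc_subset_uIcc.trans (hAA' x hx)
    _ = ENNReal.ofReal |z| ^ 2 * ∫⁻ s in A', ‖v' s‖ₑ ^ 2 := by ring

theorem eLpNorm_comp_add_right_sub_self_le_two_mul {v : ℝ → ℝ} (hv : AEStronglyMeasurable v)
    {p : ℝ≥0∞} (hp : 1 ≤ p) (A : Set ℝ) (z : ℝ) :
    eLpNorm (fun x => v (x + z) - v x) p (volume.restrict A) ≤ 2 * eLpNorm v p volume := by
  have htrans : eLpNorm (fun x => v (x + z)) p volume = eLpNorm v p volume :=
    eLpNorm_comp_measurePreserving hv (measurePreserving_add_right volume z)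
  calc eLpNorm (fun x => v (x + z) - v x) p (volume.restrict A)
      ≤ eLpNorm (fun x => v (x + z) - v x) p volume := eLpNorm_restrict_le _ _ _ _
    _ ≤ eLpNorm (fun x => v (x + z)) p volume + eLpNorm v p volume :=
        eLpNorm_sub_le (hv.comp_measurePreserving (measurePreserving_add_right volume z)) hv hp
    _ = 2 * eLpNorm v p volume := by rw [htrans, two_mul]

theorem eLpNorm_div_abs_rpow (f : ℝ → ℝ) (p : ℝ≥0∞) (μ : Measure ℝ) (z s : ℝ) :
    eLpNorm (fun x => f x / |z| ^ s) p μ = ENNReal.ofReal (|z| ^ (-s)) * eLpNorm f p μ := by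
  have hf : (fun x => f x / |z| ^ s) = |z| ^ (-s) • f := by
    ext x
    rw [Pi.smul_apply, smul_eq_mul, Real.rpow_neg (abs_nonneg z), div_eq_inv_mul]
  rw [hf, eLpNorm_const_smul, Real.enorm_of_nonneg (Real.rpow_nonneg (abs_nonneg z) _)]

theorem measurable_of_hasDerivAt_of_ne {v v' : ℝ → ℝ} {a : ℝ}
    (hderiv : ∀ x ≠ a, HasDerivAt v (v' x) x) : Measurable v :=
  measurable_of_continuousOn_compl_singleton a fun x hx =>
    (hderiv x hx).continuousAt.continuousWithinAt

noncomputable def fracKernel (l : ℝ) (v : ℝ → ℝ) (z x : ℝ) : ℝ := (v (x + z) - v x) / |z| ^ (1 + l)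

/-- `fracLaplacian G l v` is `L_λ[v]` for `λ = l`, `G_λ = G`. Where `z ↦ fracKernel l v z x`
is not integrable the Bochner integral is `0`; the estimates only use `‖∫ f‖ₑ ≤ ∫⁻ ‖f‖ₑ`,
which holds in every case. -/
noncomputable def fracLaplacian (G l : ℝ) (v : ℝ → ℝ) (x : ℝ) : ℝ := -G * ∫ z, fracKernel l v z x

theorem measurable_fracKernel {v : ℝ → ℝ} (hv : Measurable v) (l : ℝ) :
    Measurable (uncurry (fracKernel l v)) :=
  ((hv.comp (measurable_snd.add measurable_fst)).sub (hv.comp measurable_snd)).div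
    ((measurable_abs.pow_const _).comp measurable_fst)

theorem stronglyMeasurable_fracLaplacian {v : ℝ → ℝ} (hv : Measurable v) (G l : ℝ) :
    StronglyMeasurable (fracLaplacian G l v) :=
  (((measurable_fracKernel hv l).comp measurable_swap).stronglyMeasurable
    |>.integral_prod_right').const_mul _

theorem eLpNorm_fracKernel_le_of_abs_le {v v' : ℝ → ℝ}
    (hderiv : ∀ x ≠ 0, HasDerivAt v (v' x) x) (hv' : LocallyIntegrable v') {l R r z : ℝ}
    (hz : z ≠ 0) (hzr : |z| ≤ r) (hrR : r ≤ R) :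
    eLpNorm (fracKernel l v z) 2 (volume.restrict {x | R < |x|}) ≤
      ENNReal.ofReal (|z| ^ (-l)) * eLpNorm v' 2 (volume.restrict {x | R - r < |x|}) := by
  have hseg : ∀ x ∈ {x : ℝ | R < |x|}, [[x, x + z]] ⊆ {x | R - r < |x|} :=
    fun x (hx : R < |x|) y hy => by
      have hyx : |y - x| ≤ |z| := by simpa using abs_sub_left_of_mem_uIcc hy
      have := abs_sub_abs_le_abs_sub x y
      have := abs_sub_comm x y
      show R - r < |y|
      linarith
  have hderiv' : ∀ x ∈ {x : ℝ | R - r < |x|}, HasDerivAt v (v' x) x := fun x hx =>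
    hderiv x (abs_pos.mp ((sub_nonneg.mpr hrR).trans_lt hx))
  calc eLpNorm (fracKernel l v z) 2 (volume.restrict {x | R < |x|})
      = ENNReal.ofReal (|z| ^ (-(1 + l))) *
          eLpNorm (fun x => v (x + z) - v x) 2 (volume.restrict {x | R < |x|}) :=
        eLpNorm_div_abs_rpow _ _ _ _ _
    _ ≤ ENNReal.ofReal (|z| ^ (-(1 + l))) *
          (ENNReal.ofReal |z| * eLpNorm v' 2 (volume.restrict {x | R - r < |x|})) := by
        gcongr
        exact eLpNorm_comp_add_right_sub_self_le (measurableSet_lt measurable_const measurable_abs)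
          hderiv' hv' hseg
    _ = ENNReal.ofReal (|z| ^ (-l)) * eLpNorm v' 2 (volume.restrict {x | R - r < |x|}) := by
        rw [← mul_assoc, ← ENNReal.ofReal_mul (by positivity),
          ← Real.rpow_add_one (abs_ne_zero.mpr hz)]
        ring_nf

theorem eLpNorm_fracKernel_le {v : ℝ → ℝ} (hv : AEStronglyMeasurable v) (l z : ℝ) (A : Set ℝ) :
    eLpNorm (fracKernel l v z) 2 (volume.restrict A) ≤
      ENNReal.ofReal (|z| ^ (-(1 + l))) * (2 * eLpNorm v 2 volume) := by
  refine (eLpNorm_div_abs_rpow _ _ _ _ _).trans_le ?_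
  gcongr
  exact eLpNorm_comp_add_right_sub_self_le_two_mul hv one_le_two A z

theorem eLpNorm_lintegral_fracKernel_abs_le {v v' : ℝ → ℝ} (hv : Measurable v)
    (hderiv : ∀ x ≠ 0, HasDerivAt v (v' x) x) (hv' : LocallyIntegrable v') {l R r : ℝ}
    (hl : l < 1) (hr : 0 ≤ r) (hrR : r ≤ R) :
    eLpNorm (fun x => ∫⁻ z in {z | |z| ≤ r}, ‖fracKernel l v z x‖ₑ) 2
        (volume.restrict {x | R < |x|}) ≤
      ENNReal.ofReal (2 * r ^ (1 - l) / (1 - l)) *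
        eLpNorm v' 2 (volume.restrict {x | R - r < |x|}) := by
  have hS : MeasurableSet {z : ℝ | |z| ≤ r} := measurableSet_le measurable_abs measurable_const
  refine (eLpNorm_two_lintegral_le_of_le_mul (measurable_fracKernel hv l).enorm
    (measurable_abs.pow_const (-l)).ennreal_ofReal ?_ (.of_forall fun _ => ENNReal.ofReal_ne_top)
    (C := eLpNorm v' 2 (volume.restrict {x | R - r < |x|})) ?_).trans_eq ?_
  · filter_upwards [ae_restrict_of_ae (Measure.ae_ne volume 0)] with z hz
    simpa using Real.rpow_pos_of_pos (abs_pos.mpr hz) _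
  · filter_upwards [ae_restrict_mem hS, ae_restrict_of_ae (Measure.ae_ne volume 0)] with z hzr hz
    rw [eLpNorm_enorm]
    exact eLpNorm_fracKernel_le_of_abs_le hderiv hv' hz hzr hrR
  · rw [lintegral_abs_rpow_of_abs_le (by linarith) hr, neg_add_eq_sub]

theorem eLpNorm_lintegral_fracKernel_lt_abs {v : ℝ → ℝ} (hv : Measurable v) {l r : ℝ}
    (hl : 0 < l) (hr : 0 < r) (A : Set ℝ) :
    eLpNorm (fun x => ∫⁻ z in {z | r < |z|}, ‖fracKernel l v z x‖ₑ) 2 (volume.restrict A) ≤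
      ENNReal.ofReal (2 * r ^ (-l) / l) * (2 * eLpNorm v 2 volume) := by
  refine (eLpNorm_two_lintegral_le_of_le_mul (measurable_fracKernel hv l).enorm
    (measurable_abs.pow_const (-(1 + l))).ennreal_ofReal ?_
    (.of_forall fun _ => ENNReal.ofReal_ne_top) (C := 2 * eLpNorm v 2 volume) ?_).trans_eq ?_
  · filter_upwards [ae_restrict_of_ae (Measure.ae_ne volume 0)] with z hz
    simpa using Real.rpow_pos_of_pos (abs_pos.mpr hz) _
  · refine .of_forall fun z => ?_
    rw [eLpNorm_enorm]
    exact eLpNorm_fracKernel_le hv.aestronglyMeasurable l z A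
  · rw [lintegral_abs_rpow_of_lt_abs (by linarith) hr]
    ring_nf

theorem eLpNorm_fracLaplacian_le {v v' : ℝ → ℝ} (hderiv : ∀ x ≠ 0, HasDerivAt v (v' x) x)
    (hv' : LocallyIntegrable v') {G l R r : ℝ} (hG : 0 ≤ G) (hl : l ∈ Ioo 0 1) (hr : 0 < r)
    (hrR : r ≤ R) :
    eLpNorm (fracLaplacian G l v) 2 (volume.restrict {x | R < |x|}) ≤
      ENNReal.ofReal (2 * G * r ^ (1 - l) / (1 - l)) *
          eLpNorm v' 2 (volume.restrict {x | R - r < |x|}) +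
        ENNReal.ofReal (4 * G / (l * r ^ l)) * eLpNorm v 2 volume := by
  obtain ⟨hl0, hl1⟩ := hl
  have hv := measurable_of_hasDerivAt_of_ne hderiv
  set S : Set ℝ := {z | |z| ≤ r}
  have hS : MeasurableSet S := measurableSet_le measurable_abs measurable_const
  have hSc : Sᶜ = {z | r < |z|} := by ext; simp [S]
  have hK := (measurable_fracKernel hv l).enorm
  calc eLpNorm (fracLaplacian G l v) 2 (volume.restrict {x | R < |x|})
      = ENNReal.ofReal G *
          eLpNorm (fun x => ∫ z, fracKernel l v z x) 2 (volume.restrict {x | R < |x|}) := by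
        rw [show fracLaplacian G l v = (-G) • fun x => ∫ z, fracKernel l v z x from rfl,
          eLpNorm_const_smul, enorm_neg, Real.enorm_of_nonneg hG]
    _ ≤ ENNReal.ofReal G *
          (eLpNorm (fun x => ∫⁻ z in S, ‖fracKernel l v z x‖ₑ) 2 (volume.restrict {x | R < |x|}) +
            eLpNorm (fun x => ∫⁻ z in Sᶜ, ‖fracKernel l v z x‖ₑ) 2
              (volume.restrict {x | R < |x|})) := by
        gcongr
        refine (eLpNorm_mono_enorm fun x => ?_).trans (eLpNorm_add_le
          hK.lintegral_prod_left.aestronglyMeasurable hK.lintegral_prod_left.aestronglyMeasurable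
          one_le_two)
        rw [enorm_eq_self, Pi.add_apply, lintegral_add_compl _ hS]
        exact enorm_integral_le_lintegral_enorm _
    _ ≤ ENNReal.ofReal G * (ENNReal.ofReal (2 * r ^ (1 - l) / (1 - l)) *
            eLpNorm v' 2 (volume.restrict {x | R - r < |x|}) +
          ENNReal.ofReal (2 * r ^ (-l) / l) * (2 * eLpNorm v 2 volume)) := by
        rw [hSc]
        gcongr
        · exact eLpNorm_lintegral_fracKernel_abs_le hv hderiv hv' hl1 hr.le hrR
        · exact eLpNorm_lintegral_fracKernel_lt_abs hv hl0 hr _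
    _ = _ := by
        rw [← ENNReal.ofReal_ofNat 2, mul_add, ← mul_assoc, ← mul_assoc, ← mul_assoc,
          ← ENNReal.ofReal_mul hG, ← ENNReal.ofReal_mul hG, ← ENNReal.ofReal_mul (by positivity),
          Real.rpow_neg hr.le]
        congr 3 <;> ring

/-- L² estimate away from the origin for the fractional Laplacian
of an `H¹(ℝ \ {0})` function.  Let `λ ∈ (0,1)` and `v ∈ H¹(ℝ \ {0})`, i.e. `v ∈ L²(ℝ)`
is differentiable off the origin with derivative `v' ∈ L²(ℝ)`.  Then for all `R > r > 0`,
`‖L_λ[v]‖_{L²(ℝ\[-R,R])} ≤ (2 G_λ r^{1-λ}/(1-λ)) ‖v'‖_{L²(ℝ\[-R+r,R-r])}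
  + (4 G_λ/(λ r^λ)) ‖v‖_{L²(ℝ)}`. -/
theorem fractional_laplacian_L2_tail_estimate
    (l : ℝ) (hl : l ∈ Set.Ioo (0 : ℝ) 1)
    (G : ℝ) (hG : G = l * Real.Gamma ((1 + l) / 2) /
      (2 * Real.pi ^ ((1 : ℝ) / 2 + l) * Real.Gamma (1 - l / 2)))
    (v v' : ℝ → ℝ)
    (hv2 : MemLp v 2 (volume : Measure ℝ))
    (hderiv : ∀ x : ℝ, x ≠ 0 → HasDerivAt v (v' x) x)
    (hv'2 : MemLp v' 2 (volume : Measure ℝ))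
    (R r : ℝ) (hr : 0 < r) (hRr : r < R) :
    MemLp (fun x : ℝ => -G * ∫ z : ℝ, (v (x + z) - v x) / |z| ^ (1 + l)) 2
        ((volume : Measure ℝ).restrict {x : ℝ | R < |x|}) ∧
    Real.sqrt (∫ x in {x : ℝ | R < |x|},
        (-G * ∫ z : ℝ, (v (x + z) - v x) / |z| ^ (1 + l)) ^ 2) ≤
      2 * G * r ^ (1 - l) / (1 - l) *
          Real.sqrt (∫ x in {x : ℝ | R - r < |x|}, (v' x) ^ 2) +
        4 * G / (l * r ^ l) * Real.sqrt (∫ x : ℝ, (v x) ^ 2) := by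
  obtain ⟨hl0, hl1⟩ := hl
  have hG0 : 0 ≤ G := by
    have := Real.Gamma_pos_of_pos (show 0 < 1 - l / 2 by linarith)
    rw [hG]
    positivity
  have hbound := eLpNorm_fracLaplacian_le hderiv (hv'2.locallyIntegrable one_le_two) hG0
    ⟨hl0, hl1⟩ hr hRr.le
  have hfin := hv'2.restrict {x | R - r < |x|} |>.eLpNorm_ne_top
  have hfin' := hv2.eLpNorm_ne_top
  have hmeas := (stronglyMeasurable_fracLaplacian (measurable_of_hasDerivAt_of_ne hderiv) G l
    ).aestronglyMeasurable (μ := volume.restrict {x | R < |x|})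
  change MemLp (fracLaplacian G l v) 2 _ ∧ √(∫ x in _, fracLaplacian G l v x ^ 2) ≤ _
  refine ⟨⟨hmeas, hbound.trans_lt (by finiteness)⟩, ?_⟩
  rw [sqrt_integral_sq_eq_toReal_eLpNorm hmeas, sqrt_integral_sq_eq_toReal_eLpNorm hv'2.1.restrict,
    sqrt_integral_sq_eq_toReal_eLpNorm hv2.1]
  refine (ENNReal.toReal_mono (by finiteness) hbound).trans_eq ?_
  rw [ENNReal.toReal_add (by finiteness) (by finiteness), ENNReal.toReal_mul, ENNReal.toReal_mul,
    ENNReal.toReal_ofReal (by positivity), ENNReal.toReal_ofReal (by positivity)]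
end

section
/- Let λ ∈ (0,1) and let Φ : ℝ → ℝ be locally Lipschitz with |Φ(x)| ≤ M(1 + |x|^{λ'}) for some 0 < λ' < λ and |Φ'(x)| ≤ L/(1 + |x|^{1-λ}) for a.e. x. Then for every x ∈ ℝ the integral ∫_ℝ |Φ(x+z) - Φ(x)|/|z|^{1+λ} dz is finite, so L_λ[Φ](x) is well-defined by the Lévy-Khintchine formula, and L_λ[Φ] is continuous and bounded on ℝ. -/
open MeasureTheory Set Filter
open scoped Interval

/-!
Split the integral at a radius `r`. For `|z| ≤ r` a Lipschitz constant `K` of `Φ` near `x` bounds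
the integrand by `K |z|^(-λ)`; for `|z| > r` the growth bound gives `(c + M |z|^λ') |z|^(-1-λ)`
with `c = 2M (1 + |x|^λ')`. This radial majorant is integrable, which gives integrability, and
for `r = 1` it can be chosen uniformly for `x` near `x₀`, which gives continuity by dominated
convergence. For boundedness take `r ≈ |x|/2`: since a locally Lipschitz `Φ` is the integral of its
a.e. derivative, the decay of `Φ'` gives `K ≤ L r^(λ-1)`, and every term of the integral of the
majorant, `2 (K r^(1-λ)/(1-λ) + c r^(-λ)/λ + M r^(λ'-λ)/(λ-λ'))`, stays bounded because `λ' < λ`.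
-/

theorem LocallyLipschitz.integral_deriv_eq_sub {f : ℝ → ℝ} (hf : LocallyLipschitz f) (a b : ℝ) :
    ∫ t in a..b, deriv f t = f b - f a := by
  obtain ⟨K, hK⟩ := hf.locallyLipschitzOn.exists_lipschitzOnWith_of_compact isCompact_uIcc
  exact hK.absolutelyContinuousOnInterval.integral_deriv_eq_sub

theorem LocallyLipschitz.abs_sub_le_of_ae_abs_deriv_le {f : ℝ → ℝ} (hf : LocallyLipschitz f)
    {a b C : ℝ} (h : ∀ᵐ t, t ∈ Ι a b → |deriv f t| ≤ C) : |f b - f a| ≤ C * |b - a| := by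
  rw [← hf.integral_deriv_eq_sub, ← Real.norm_eq_abs]
  exact intervalIntegral.norm_integral_le_of_norm_le_const_ae (by simpa only [Real.norm_eq_abs])

theorem integrable_comp_abs_of_integrableOn_Ioi {f : ℝ → ℝ} (hf : IntegrableOn f (Ioi 0)) :
    Integrable (fun x => f |x|) := by
  have hIci : Integrable ((Ici 0).indicator f) := (integrable_indicator_iff measurableSet_Ici).2
    ((integrableOn_Ici_iff_integrableOn_Ioi (by simp)).2 hf)
  have hIoi : Integrable ((Ioi 0).indicator f) := (integrable_indicator_iff measurableSet_Ioi).2 hf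
  refine (hIci.add hIoi.comp_neg).congr (.of_forall fun x => ?_)
  rcases le_or_gt 0 x with hx | hx
  · simp [hx, abs_of_nonneg hx]
  · simp [hx.not_ge, abs_of_neg hx, hx]

theorem nonneg_of_abs_le_mul_one_add_rpow {Φ : ℝ → ℝ} {M p : ℝ} (hp : p ≠ 0)
    (hΦ : ∀ y, |Φ y| ≤ M * (1 + |y| ^ p)) : 0 ≤ M := by
  simpa [Real.zero_rpow hp] using (abs_nonneg _).trans (hΦ 0)

theorem abs_add_sub_le_of_abs_le_mul_one_add_rpow {Φ : ℝ → ℝ} {M p : ℝ} (hp0 : 0 < p) (hp1 : p ≤ 1)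
    (hΦ : ∀ y, |Φ y| ≤ M * (1 + |y| ^ p)) {x R : ℝ} (hx : |x| ≤ R) (z : ℝ) :
    |Φ (x + z) - Φ x| ≤ 2 * M * (1 + R ^ p) + M * |z| ^ p := by
  have hM := nonneg_of_abs_le_mul_one_add_rpow hp0.ne' hΦ
  have hxR : |x| ^ p ≤ R ^ p := Real.rpow_le_rpow (abs_nonneg x) hx hp0.le
  have hsub : |x + z| ^ p ≤ |x| ^ p + |z| ^ p :=
    (Real.rpow_le_rpow (abs_nonneg _) (abs_add_le x z) hp0.le).trans
      (Real.rpow_add_le_add_rpow (abs_nonneg x) (abs_nonneg z) hp0.le hp1)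
  calc |Φ (x + z) - Φ x| ≤ |Φ (x + z)| + |Φ x| := abs_sub _ _
    _ ≤ M * (1 + |x + z| ^ p) + M * (1 + |x| ^ p) := add_le_add (hΦ _) (hΦ _)
    _ ≤ _ := by nlinarith

/-- `L_λ[Φ] x = -G_λ ∫ z, levyIntegrand λ Φ x z`. -/
noncomputable def levyIntegrand (l : ℝ) (Φ : ℝ → ℝ) (x z : ℝ) : ℝ :=
  (Φ (x + z) - Φ x) / |z| ^ (1 + l)

/-- Radial majorant of `levyIntegrand` when `Φ` is `K`-Lipschitz on `closedBall x r` and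
`|Φ (x + z) - Φ x| ≤ c + M |z|^λ'`. -/
noncomputable def levyMajorant (l l' r K c M s : ℝ) : ℝ :=
  if s ≤ r then K * s ^ (-l) else c * s ^ (-(1 + l)) + M * s ^ (l' - (1 + l))

section Majorant

variable {l l' r : ℝ} (K c M : ℝ)

theorem levyMajorant_of_le {s : ℝ} (hs : s ≤ r) : levyMajorant l l' r K c M s = K * s ^ (-l) :=
  if_pos hs

theorem levyMajorant_of_lt {s : ℝ} (hs : r < s) :
    levyMajorant l l' r K c M s = c * s ^ (-(1 + l)) + M * s ^ (l' - (1 + l)) :=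
  if_neg hs.not_ge

theorem integrableOn_levyMajorant (hl : l ∈ Ioo 0 1) (hl' : l' < l) (hr : 0 < r) :
    IntegrableOn (levyMajorant l l' r K c M) (Ioi 0) := by
  obtain ⟨hl0, hl1⟩ := hl
  have hIoc : IntegrableOn (fun s : ℝ => s ^ (-l)) (Ioc 0 r) :=
    (intervalIntegral.intervalIntegrable_rpow' (by linarith)).1
  have hIoi (p : ℝ) (hp : p < -1) : IntegrableOn (fun s : ℝ => s ^ p) (Ioi r) :=
    integrableOn_Ioi_rpow_of_lt hp hr
  rw [← Ioc_union_Ioi_eq_Ioi hr.le]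
  refine IntegrableOn.union ?_ ?_
  · exact IntegrableOn.congr_fun (hIoc.const_mul K)
      (fun s hs => (levyMajorant_of_le K c M hs.2).symm) measurableSet_Ioc
  · exact IntegrableOn.congr_fun
      (((hIoi _ (by linarith)).const_mul c).add ((hIoi _ (by linarith)).const_mul M))
      (fun s hs => (levyMajorant_of_lt K c M hs).symm) measurableSet_Ioi

theorem setIntegral_levyMajorant (hl : l ∈ Ioo 0 1) (hl' : l' < l) (hr : 0 < r) :
    ∫ s in Ioi 0, levyMajorant l l' r K c M s =
      K * (r ^ (1 - l) / (1 - l)) + c * (r ^ (-l) / l) + M * (r ^ (l' - l) / (l - l')) := by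
  have hint := integrableOn_levyMajorant K c M hl hl' hr
  obtain ⟨hl0, hl1⟩ := hl
  have hIoi (p : ℝ) (hp : p < -1) : IntegrableOn (fun s : ℝ => s ^ p) (Ioi r) :=
    integrableOn_Ioi_rpow_of_lt hp hr
  rw [← Ioc_union_Ioi_eq_Ioi hr.le] at hint ⊢
  rw [setIntegral_union Ioc_disjoint_Ioi_same measurableSet_Ioi
      (hint.mono_set subset_union_left) (hint.mono_set subset_union_right),
    setIntegral_congr_fun measurableSet_Ioc (fun s hs => levyMajorant_of_le K c M hs.2),
    setIntegral_congr_fun measurableSet_Ioi (fun s hs => levyMajorant_of_lt K c M hs),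
    integral_add ((hIoi _ (by linarith)).const_mul c) ((hIoi _ (by linarith)).const_mul M),
    integral_const_mul, integral_const_mul, integral_const_mul,
    ← intervalIntegral.integral_of_le hr.le, integral_rpow (by left; linarith),
    integral_Ioi_rpow_of_lt (by linarith) hr, integral_Ioi_rpow_of_lt (by linarith) hr,
    Real.zero_rpow (by linarith)]
  rw [show -l + 1 = 1 - l by ring, show -(1 + l) + 1 = -l by ring,
    show l' - (1 + l) + 1 = -(l - l') by ring, sub_zero, neg_div_neg_eq, neg_div_neg_eq, neg_sub]
  ring

theorem integrable_levyMajorant_abs (hl : l ∈ Ioo 0 1) (hl' : l' < l) (hr : 0 < r) :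
    Integrable (fun z => levyMajorant l l' r K c M |z|) :=
  integrable_comp_abs_of_integrableOn_Ioi (integrableOn_levyMajorant K c M hl hl' hr)

theorem integral_levyMajorant_abs (hl : l ∈ Ioo 0 1) (hl' : l' < l) (hr : 0 < r) :
    ∫ z, levyMajorant l l' r K c M |z| =
      2 * (K * (r ^ (1 - l) / (1 - l)) + c * (r ^ (-l) / l) + M * (r ^ (l' - l) / (l - l'))) := by
  rw [integral_comp_abs, setIntegral_levyMajorant K c M hl hl' hr]

end Majorant

section Integrand

variable {l l' r K c M : ℝ} {Φ : ℝ → ℝ} {x : ℝ}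

theorem abs_levyIntegrand_le_levyMajorant (hl : l ≠ 0) (hr : 0 ≤ r)
    (hK : ∀ z, |z| ≤ r → |Φ (x + z) - Φ x| ≤ K * |z|)
    (hc : ∀ z, |Φ (x + z) - Φ x| ≤ c + M * |z| ^ l') (z : ℝ) :
    |levyIntegrand l Φ x z| ≤ levyMajorant l l' r K c M |z| := by
  rcases eq_or_ne z 0 with rfl | hz
  · simp [levyIntegrand, levyMajorant, hr, Real.zero_rpow (neg_ne_zero.2 hl)]
  have hz : 0 < |z| := abs_pos.2 hz
  rw [levyIntegrand, abs_div, abs_of_pos (Real.rpow_pos_of_pos hz _)]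
  rcases le_or_gt |z| r with hzr | hzr
  · rw [levyMajorant_of_le K c M hzr, Real.rpow_add hz, Real.rpow_one, Real.rpow_neg hz.le,
      div_le_iff₀ (by positivity)]
    calc |Φ (x + z) - Φ x| ≤ K * |z| := hK z hzr
      _ = K * (|z| ^ l)⁻¹ * (|z| * |z| ^ l) := by field_simp
  · rw [levyMajorant_of_lt K c M hzr, Real.rpow_neg hz.le, Real.rpow_sub hz, ← div_eq_mul_inv,
      mul_div_assoc', ← add_div]
    exact div_le_div_of_nonneg_right (hc z) (by positivity)

theorem Continuous.measurable_levyIntegrand (hΦ : Continuous Φ) (l x : ℝ) :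
    Measurable (levyIntegrand l Φ x) := by
  unfold levyIntegrand
  fun_prop

theorem integrable_levyIntegrand (hΦ : Continuous Φ) (hl : l ∈ Ioo 0 1) (hl' : l' < l)
    (hr : 0 < r) (hK : ∀ z, |z| ≤ r → |Φ (x + z) - Φ x| ≤ K * |z|)
    (hc : ∀ z, |Φ (x + z) - Φ x| ≤ c + M * |z| ^ l') :
    Integrable (levyIntegrand l Φ x) :=
  (integrable_levyMajorant_abs K c M hl hl' hr).mono'
    (hΦ.measurable_levyIntegrand l x).aestronglyMeasurable
    (.of_forall (abs_levyIntegrand_le_levyMajorant hl.1.ne' hr.le hK hc))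

theorem integral_abs_levyIntegrand_le (hΦ : Continuous Φ) (hl : l ∈ Ioo 0 1) (hl' : l' < l)
    (hr : 0 < r) (hK : ∀ z, |z| ≤ r → |Φ (x + z) - Φ x| ≤ K * |z|)
    (hc : ∀ z, |Φ (x + z) - Φ x| ≤ c + M * |z| ^ l') :
    ∫ z, |levyIntegrand l Φ x z| ≤
      2 * (K * (r ^ (1 - l) / (1 - l)) + c * (r ^ (-l) / l) + M * (r ^ (l' - l) / (l - l'))) := by
  rw [← integral_levyMajorant_abs K c M hl hl' hr]
  exact integral_mono (integrable_levyIntegrand hΦ hl hl' hr hK hc).abs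
    (integrable_levyMajorant_abs K c M hl hl' hr)
    (abs_levyIntegrand_le_levyMajorant hl.1.ne' hr.le hK hc)

theorem LipschitzOnWith.abs_add_sub_le {f : ℝ → ℝ} {K : NNReal} {s : Set ℝ}
    (hf : LipschitzOnWith K f s) {x r : ℝ} (hs : Metric.closedBall x r ⊆ s) {z : ℝ}
    (hz : |z| ≤ r) : |f (x + z) - f x| ≤ K * |z| := by
  have hx : x ∈ s := hs (Metric.mem_closedBall_self ((abs_nonneg z).trans hz))
  have hxz : x + z ∈ s := hs (by simpa [Metric.mem_closedBall, Real.dist_eq] using hz)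
  simpa [Real.dist_eq] using hf.dist_le_mul _ hxz _ hx

theorem div_one_add_rpow_le_mul_rpow_neg {L s u r : ℝ} (hL : 0 ≤ L) (hs : 0 ≤ s) (hu : 0 ≤ u)
    (hr : 1 ≤ r) (hru : r ≤ max 1 u) : L / (1 + u ^ s) ≤ L * r ^ (-s) := by
  rw [Real.rpow_neg (by linarith), ← div_eq_mul_inv]
  refine div_le_div_of_nonneg_left hL (by positivity) ?_
  rcases le_total u 1 with hu1 | hu1
  · rw [max_eq_left hu1] at hru
    rw [le_antisymm hru hr, Real.one_rpow]
    linarith [Real.rpow_nonneg hu s]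
  · rw [max_eq_right hu1] at hru
    linarith [Real.rpow_le_rpow (by linarith) hru hs]

theorem one_add_rpow_mul_rpow_neg_le {x r l l' : ℝ} (hr : 1 ≤ r) (hx : |x| ≤ 2 * r)
    (hl' : 0 < l') (hl'l : l' ≤ l) (hl'1 : l' ≤ 1) : (1 + |x| ^ l') * r ^ (-l) ≤ 3 := by
  have hr0 : 0 < r := by linarith
  have h2 : (2 : ℝ) ^ l' ≤ 2 := by
    simpa using Real.rpow_le_rpow_of_exponent_le one_le_two hl'1
  have hx' : |x| ^ l' ≤ 2 * r ^ l' :=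
    calc |x| ^ l' ≤ (2 * r) ^ l' := Real.rpow_le_rpow (abs_nonneg x) hx hl'.le
      _ = 2 ^ l' * r ^ l' := Real.mul_rpow zero_le_two hr0.le
      _ ≤ 2 * r ^ l' := by gcongr
  have hrl : r ^ (-l) ≤ 1 := Real.rpow_le_one_of_one_le_of_nonpos hr (by linarith)
  have hrll : r ^ l' * r ^ (-l) ≤ 1 := by
    rw [← Real.rpow_add hr0]
    exact Real.rpow_le_one_of_one_le_of_nonpos hr (by linarith)
  nlinarith [Real.rpow_nonneg hr0.le (-l)]

section LocallyLipschitz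

variable {l l' M : ℝ} {Φ : ℝ → ℝ}

theorem LocallyLipschitz.integrable_levyIntegrand (hΦ : LocallyLipschitz Φ) (hl : l ∈ Ioo 0 1)
    (hl' : 0 < l') (hl'l : l' < l) (hM : ∀ y, |Φ y| ≤ M * (1 + |y| ^ l')) (x : ℝ) :
    Integrable (levyIntegrand l Φ x) := by
  obtain ⟨K, hK⟩ :=
    hΦ.locallyLipschitzOn.exists_lipschitzOnWith_of_compact (isCompact_closedBall x 1)
  exact _root_.integrable_levyIntegrand hΦ.continuous hl hl'l one_pos
    (fun z hz => hK.abs_add_sub_le subset_rfl hz)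
    (abs_add_sub_le_of_abs_le_mul_one_add_rpow hl' (by linarith [hl.2]) hM le_rfl)

theorem LocallyLipschitz.continuous_integral_levyIntegrand (hΦ : LocallyLipschitz Φ)
    (hl : l ∈ Ioo 0 1) (hl' : 0 < l') (hl'l : l' < l) (hM : ∀ y, |Φ y| ≤ M * (1 + |y| ^ l')) :
    Continuous fun x => ∫ z, levyIntegrand l Φ x z := by
  refine continuous_iff_continuousAt.2 fun x₀ => ?_
  obtain ⟨K, hK⟩ :=
    hΦ.locallyLipschitzOn.exists_lipschitzOnWith_of_compact (isCompact_closedBall x₀ 2)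
  refine continuousAt_of_dominated (.of_forall fun x =>
      (hΦ.continuous.measurable_levyIntegrand l x).aestronglyMeasurable) ?_
    (integrable_levyMajorant_abs K (2 * M * (1 + (|x₀| + 1) ^ l')) M hl hl'l one_pos)
    (.of_forall fun z => ?_)
  · filter_upwards [Metric.ball_mem_nhds x₀ one_pos] with x hx
    rw [Metric.mem_ball, Real.dist_eq] at hx
    refine .of_forall (abs_levyIntegrand_le_levyMajorant hl.1.ne' zero_le_one
      (fun z hz => hK.abs_add_sub_le (Metric.closedBall_subset_closedBall' ?_) hz)
      (abs_add_sub_le_of_abs_le_mul_one_add_rpow hl' (by linarith [hl.2]) hM ?_))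
    · rw [Real.dist_eq]; linarith
    · linarith [abs_sub_abs_le_abs_sub x x₀]
  · have hc := hΦ.continuous
    unfold levyIntegrand
    fun_prop

theorem LocallyLipschitz.exists_integral_abs_levyIntegrand_le (hΦ : LocallyLipschitz Φ)
    (hl : l ∈ Ioo 0 1) (hl' : 0 < l') (hl'l : l' < l) (hM : ∀ y, |Φ y| ≤ M * (1 + |y| ^ l'))
    {L : ℝ} (hL : ∀ᵐ t, |deriv Φ t| ≤ L / (1 + |t| ^ (1 - l))) :
    ∃ C, ∀ x, ∫ z, |levyIntegrand l Φ x z| ≤ C := by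
  obtain ⟨hl0, hl1⟩ := hl
  have hL0 : 0 ≤ L := by
    obtain ⟨t, ht⟩ := hL.exists
    have hpos : 0 < 1 + |t| ^ (1 - l) := by positivity
    simpa [div_mul_cancel₀ _ hpos.ne'] using mul_nonneg ((abs_nonneg _).trans ht) hpos.le
  have hM0 := nonneg_of_abs_le_mul_one_add_rpow hl'.ne' hM
  refine ⟨2 * (L / (1 - l) + 2 * M * (3 / l) + M / (l - l')), fun x => ?_⟩
  -- `r = max 1 (|x|/2)`; the segment from `x` to `x + z`, `|z| ≤ r`, then avoids the ball of
  -- radius `r` whenever `r > 1`, where the decay of `Φ'` gives the Lipschitz constant `L r^(l-1)`.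
  obtain ⟨r, hr1, hxr, hr⟩ : ∃ r, 1 ≤ r ∧ |x| ≤ 2 * r ∧ r ≤ max 1 (|x| - r) := by
    refine ⟨max 1 (|x| / 2), le_max_left _ _, by linarith [le_max_right 1 (|x| / 2)], ?_⟩
    rcases le_total (|x| / 2) 1 with h | h
    · rw [max_eq_left h]
      exact le_max_left _ _
    · rw [max_eq_right h]
      exact le_max_of_le_right (by linarith)
  have hK (z : ℝ) (hz : |z| ≤ r) : |Φ (x + z) - Φ x| ≤ L * r ^ (-(1 - l)) * |z| := by
    have key := hΦ.abs_sub_le_of_ae_abs_deriv_le (a := x) (b := x + z)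
      (hL.mono fun t ht htI => ht.trans (div_one_add_rpow_le_mul_rpow_neg hL0 (by linarith)
        (abs_nonneg t) hr1 (hr.trans (max_le_max le_rfl ?_))))
    · simpa using key
    · have htx : |t - x| ≤ |z| := by simpa using abs_sub_left_of_mem_uIcc (uIoc_subset_uIcc htI)
      linarith [abs_sub_abs_le_abs_sub x t, abs_sub_comm x t]
  refine (integral_abs_levyIntegrand_le hΦ.continuous ⟨hl0, hl1⟩ hl'l (by linarith) hK
    (abs_add_sub_le_of_abs_le_mul_one_add_rpow hl' (by linarith) hM le_rfl)).trans ?_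
  have hr0 : 0 < r := by linarith
  have hlin : L * r ^ (-(1 - l)) * (r ^ (1 - l) / (1 - l)) = L / (1 - l) := by
    rw [Real.rpow_neg hr0.le]
    field_simp [(Real.rpow_pos_of_pos hr0 (1 - l)).ne']
  have hmid : 2 * M * (1 + |x| ^ l') * (r ^ (-l) / l) ≤ 2 * M * (3 / l) := by
    have h3 := one_add_rpow_mul_rpow_neg_le hr1 hxr hl' hl'l.le (by linarith)
    calc 2 * M * (1 + |x| ^ l') * (r ^ (-l) / l)
        = 2 * M / l * ((1 + |x| ^ l') * r ^ (-l)) := by ring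
      _ ≤ 2 * M / l * 3 := by gcongr
      _ = 2 * M * (3 / l) := by ring
  have htail : M * (r ^ (l' - l) / (l - l')) ≤ M * (1 / (l - l')) := by
    gcongr
    exact Real.rpow_le_one_of_one_le_of_nonpos hr1 (by linarith)
  rw [mul_one_div] at htail
  linarith

end LocallyLipschitz

theorem fractional_laplacian_sublinear_growth_general
    (l : ℝ) (hl : l ∈ Set.Ioo (0 : ℝ) 1)
    (G : ℝ)
    (Φ : ℝ → ℝ) (hlip : LocallyLipschitz Φ)
    (l' : ℝ) (hl' : 0 < l') (hl'l : l' < l)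
    (M : ℝ) (hM : ∀ x : ℝ, |Φ x| ≤ M * (1 + |x| ^ l'))
    (L : ℝ) (hL : ∀ᵐ x : ℝ, |deriv Φ x| ≤ L / (1 + |x| ^ (1 - l))) :
    (∀ x : ℝ, Integrable (fun z : ℝ => (Φ (x + z) - Φ x) / |z| ^ (1 + l))) ∧
    Continuous (fun x : ℝ => -G * ∫ z : ℝ, (Φ (x + z) - Φ x) / |z| ^ (1 + l)) ∧
    ∃ C : ℝ, ∀ x : ℝ, |(-G) * ∫ z : ℝ, (Φ (x + z) - Φ x) / |z| ^ (1 + l)| ≤ C := by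
  obtain ⟨C, hC⟩ := hlip.exists_integral_abs_levyIntegrand_le hl hl' hl'l hM hL
  refine ⟨hlip.integrable_levyIntegrand hl hl' hl'l hM,
    continuous_const.mul (hlip.continuous_integral_levyIntegrand hl hl' hl'l hM),
    |G| * C, fun x => ?_⟩
  rw [abs_mul, abs_neg]
  gcongr
  exact (abs_integral_le_integral_abs).trans (hC x)

/-- well-posedness of the fractional Laplacian on sublinearly growing
functions.  Let `λ ∈ (0,1)` and let `Φ : ℝ → ℝ` be locally Lipschitz with
`|Φ x| ≤ M (1 + |x|^{λ'})` for some `0 < λ' < λ` and `|Φ' x| ≤ L/(1 + |x|^{1-λ})` for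
a.e. `x`.  Then for every `x` the integral `∫ |Φ(x+z) - Φ x|/|z|^{1+λ} dz` is finite,
so `L_λ[Φ]` is well-defined by the Lévy-Khintchine formula, and `L_λ[Φ]` is continuous
and bounded on `ℝ`. -/
theorem fractional_laplacian_sublinear_growth
    (l : ℝ) (hl : l ∈ Set.Ioo (0 : ℝ) 1)
    (G : ℝ) (hG : G = l * Real.Gamma ((1 + l) / 2) /
      (2 * Real.pi ^ ((1 : ℝ) / 2 + l) * Real.Gamma (1 - l / 2)))
    (Φ : ℝ → ℝ) (hlip : LocallyLipschitz Φ)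
    (l' : ℝ) (hl' : 0 < l') (hl'l : l' < l)
    (M : ℝ) (hM : ∀ x : ℝ, |Φ x| ≤ M * (1 + |x| ^ l'))
    (L : ℝ) (hL : ∀ᵐ x : ℝ, |deriv Φ x| ≤ L / (1 + |x| ^ (1 - l))) :
    (∀ x : ℝ, Integrable (fun z : ℝ => (Φ (x + z) - Φ x) / |z| ^ (1 + l))) ∧
    Continuous (fun x : ℝ => -G * ∫ z : ℝ, (Φ (x + z) - Φ x) / |z| ^ (1 + l)) ∧
    ∃ C : ℝ, ∀ x : ℝ, |(-G) * ∫ z : ℝ, (Φ (x + z) - Φ x) / |z| ^ (1 + l)| ≤ C :=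
  fractional_laplacian_sublinear_growth_general l hl G Φ hlip l' hl' hl'l M hM L hL
end Integrand
end

section
/- Let λ ∈ (0,1) and let u ∈ L¹(ℝ) ∩ BV(ℝ). Then for all r > 0, ∫_ℝ |ξ|^λ |F(u)(ξ)|² dξ ≤ (1/(2π²(1-λ) r^{1-λ})) |u|²_{BV(ℝ)} + (2 r^{1+λ}/(1+λ)) ‖u‖²_{L¹(ℝ)}. -/
/-!
The decay of `𝓕 u` comes from translation: since `𝓕 (u (· + h)) ξ = 𝐞 (h ξ) 𝓕 u ξ`,
`2 |sin (π h ξ)| ‖𝓕 u ξ‖ ≤ ‖u (· + h) - u‖_{L¹} ≤ h |u|_{BV}`, and letting `h → 0⁺` gives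
`2π |ξ| ‖𝓕 u ξ‖ ≤ |u|_{BV}`; trivially `‖𝓕 u ξ‖ ≤ ‖u‖_{L¹}`. Hence `|ξ|^λ ‖𝓕 u ξ‖²` is at most
`|ξ|^λ ‖u‖²_{L¹}` for `|ξ| ≤ r` and `|ξ|^(λ-2) |u|²_{BV} / 4π²` for `|ξ| > r`, and integrating
these two majorants gives the two terms of the estimate.
-/

open MeasureTheory Set FourierTransform Real Filter Topology

theorem abs_mul_le_of_forall_abs_sin_mul_le {a c V : ℝ}
    (h : ∀ t > 0, |sin (a * t)| * c ≤ t * V) : |a| * c ≤ V := by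
  have hlim : Tendsto (fun t ↦ |a| * |sinc (a * t)| * c) (𝓝[>] 0) (𝓝 (|a| * c)) := by
    have : Tendsto (fun t ↦ sinc (a * t)) (𝓝 0) (𝓝 1) := by
      simpa [Function.comp_def] using (continuous_sinc.comp (continuous_const_mul a)).tendsto 0
    simpa using ((this.abs.const_mul |a|).mul_const c).mono_left nhdsWithin_le_nhds
  refine le_of_tendsto hlim (eventually_mem_nhdsWithin.mono fun t (ht : 0 < t) ↦ ?_)
  have hsin : |sin (a * t)| = t * (|a| * |sinc (a * t)|) := by
    rcases eq_or_ne (a * t) 0 with hat | hat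
    · simp [mul_eq_zero.mp hat |>.resolve_right ht.ne']
    · have ha : a ≠ 0 := left_ne_zero_of_mul hat
      rw [sinc_of_ne_zero hat, abs_div, abs_mul, abs_of_pos ht]
      field_simp
  have := h t ht
  rw [hsin, mul_assoc] at this
  exact le_of_mul_le_mul_left this ht

theorem norm_one_sub_fourierChar (t : ℝ) : ‖1 - (𝐞 t : ℂ)‖ = 2 * |sin (π * t)| := by
  rw [norm_sub_rev, fourierChar_apply, mul_comm, Complex.norm_exp_I_mul_ofReal_sub_one,
    show 2 * π * t / 2 = π * t by ring, norm_mul, Real.norm_two, Real.norm_eq_abs]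

theorem fourier_comp_add_right {E : Type*} [NormedAddCommGroup E] [NormedSpace ℂ E]
    (f : ℝ → E) (h ξ : ℝ) : 𝓕 (fun x ↦ f (x + h)) ξ = 𝐞 (h * ξ) • 𝓕 f ξ := by
  have := congrFun (VectorFourier.fourierIntegral_comp_add_right 𝐞 volume (innerₗ ℝ) f h) ξ
  simp only [Function.comp_def, innerₗ_apply_apply, RCLike.inner_apply, conj_trivial] at this
  rwa [mul_comm] at this

theorem norm_fourier_le_integral_norm {E : Type*} [NormedAddCommGroup E] [NormedSpace ℂ E]
    (f : ℝ → E) (ξ : ℝ) : ‖𝓕 f ξ‖ ≤ ∫ x, ‖f x‖ :=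
  VectorFourier.norm_fourierIntegral_le_integral_norm _ _ _ _ _

theorem norm_one_sub_fourierChar_mul_norm_fourier_le {E : Type*} [NormedAddCommGroup E]
    [NormedSpace ℂ E] {f : ℝ → E} (hf : Integrable f) (h ξ : ℝ) :
    ‖1 - (𝐞 (h * ξ) : ℂ)‖ * ‖𝓕 f ξ‖ ≤ ∫ x, ‖f (x + h) - f x‖ := by
  have hdiff : 𝓕 (fun x ↦ f (x + h) - f x) ξ = 𝓕 (fun x ↦ f (x + h)) ξ - 𝓕 f ξ := by
    simp only [fourier_eq, smul_sub]
    exact integral_sub ((fourierIntegral_convergent_iff ξ).2 (hf.comp_add_right h))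
      ((fourierIntegral_convergent_iff ξ).2 hf)
  calc ‖1 - (𝐞 (h * ξ) : ℂ)‖ * ‖𝓕 f ξ‖ = ‖𝓕 (fun x ↦ f (x + h) - f x) ξ‖ := by
        rw [← norm_smul, hdiff, fourier_comp_add_right, Circle.smul_def, sub_smul, one_smul,
          norm_sub_rev]
    _ ≤ ∫ x, ‖f (x + h) - f x‖ := norm_fourier_le_integral_norm _ ξ

theorem BoundedVariationOn.integral_abs_comp_add_sub_le {u : ℝ → ℝ} (hu : Integrable u)
    (hbv : BoundedVariationOn u univ) {h : ℝ} (hh : 0 ≤ h) :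
    ∫ x, |u (x + h) - u x| ≤ h * (eVariationOn u univ).toReal := by
  set w := variationOnFromTo u univ 0
  have hlbv := hbv.locallyBoundedVariationOn
  have hw : Monotone w := monotoneOn_univ.mp (variationOnFromTo.monotoneOn hlbv (mem_univ 0))
  have hwindow (N : ℝ) (hN : 0 ≤ N) :
      ∫ x in -N..N, |u (x + h) - u x| ≤ h * (eVariationOn u univ).toReal := by
    calc ∫ x in -N..N, |u (x + h) - u x| ≤ ∫ x in -N..N, h * slope w x (x + h) := by
          refine intervalIntegral.integral_mono_on (by linarith)
            ((hu.comp_add_right h).sub hu).abs.intervalIntegrable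
            (((hw.monotoneOn _).intervalIntegrable_slope (by linarith) hh).const_mul h) ?_
          intro x _
          have hslope : h * slope w x (x + h) = w (x + h) - w x := by
            simpa using sub_smul_slope w x (x + h)
          rw [hslope]
          exact variationOnFromTo.abs_sub_le_sub_of_le hlbv (mem_univ 0) (mem_univ x)
            (mem_univ _) (by linarith)
      _ = h * ∫ x in -N..N, slope w x (x + h) := intervalIntegral.integral_const_mul _ _
      _ ≤ h * (w (N + h) - w (-N)) := by
          gcongr
          exact (hw.monotoneOn _).intervalIntegral_slope_le (by linarith) hh
      _ ≤ h * (eVariationOn u univ).toReal := by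
          gcongr
          rw [variationOnFromTo.sub_right hlbv (mem_univ 0) (mem_univ _) (mem_univ _)]
          exact (le_abs_self _).trans (variationOnFromTo.abs_le_eVariationOn hbv)
  exact le_of_tendsto (intervalIntegral_tendsto_integral ((hu.comp_add_right h).sub hu).abs
    tendsto_neg_atTop_atBot tendsto_id) ((eventually_ge_atTop 0).mono hwindow)

theorem BoundedVariationOn.two_mul_pi_mul_abs_mul_norm_fourier_le {u : ℝ → ℝ}
    (hu : Integrable u) (hbv : BoundedVariationOn u univ) (ξ : ℝ) :
    2 * π * |ξ| * ‖𝓕 (fun x ↦ (u x : ℂ)) ξ‖ ≤ (eVariationOn u univ).toReal := by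
  have htranslate (t : ℝ) (ht : 0 < t) :
      |sin (π * ξ * t)| * (2 * ‖𝓕 (fun x ↦ (u x : ℂ)) ξ‖) ≤ t * (eVariationOn u univ).toReal :=
    calc |sin (π * ξ * t)| * (2 * ‖𝓕 (fun x ↦ (u x : ℂ)) ξ‖)
        = ‖1 - (𝐞 (t * ξ) : ℂ)‖ * ‖𝓕 (fun x ↦ (u x : ℂ)) ξ‖ := by
          rw [norm_one_sub_fourierChar]; ring_nf
      _ ≤ ∫ x, ‖(u (x + t) : ℂ) - u x‖ :=
          norm_one_sub_fourierChar_mul_norm_fourier_le hu.ofReal t ξ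
      _ = ∫ x, |u (x + t) - u x| := by
          simp_rw [← Complex.ofReal_sub, Complex.norm_real, Real.norm_eq_abs]
      _ ≤ t * (eVariationOn u univ).toReal := hbv.integral_abs_comp_add_sub_le hu ht.le
  have := abs_mul_le_of_forall_abs_sin_mul_le htranslate
  rw [abs_mul, abs_of_pos pi_pos] at this
  linarith

theorem integrable_comp_abs {f : ℝ → ℝ} (hf : IntegrableOn f (Ioi 0)) :
    Integrable (fun x ↦ f |x|) := by
  have hpos : IntegrableOn (fun x ↦ f |x|) (Ici 0) := by
    rw [integrableOn_Ici_iff_integrableOn_Ioi]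
    exact hf.congr_fun (fun x hx ↦ by rw [abs_of_pos hx]) measurableSet_Ioi
  have hneg : IntegrableOn (fun x ↦ f |x|) (Iic 0) := by
    have := ((Measure.measurePreserving_neg (volume : Measure ℝ)).integrableOn_comp_preimage
      (Homeomorph.neg ℝ).measurableEmbedding).2 hpos
    simpa [Function.comp_def] using this
  simpa [Iic_union_Ici] using hneg.union hpos

theorem integral_Ioc_zero_rpow {l : ℝ} (hl : -1 < l) {r : ℝ} (hr : 0 ≤ r) :
    ∫ t in Ioc 0 r, t ^ l = r ^ (1 + l) / (1 + l) := by
  rw [← intervalIntegral.integral_of_le hr, integral_rpow (Or.inl hl),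
    zero_rpow (by linarith), add_comm]
  ring

noncomputable def splitRpowMajorant (l r M K t : ℝ) : ℝ :=
  if t ≤ r then t ^ l * M ^ 2 else K ^ 2 * t ^ (l - 2)

section splitRpowMajorant

variable {l r : ℝ} (M K : ℝ)

theorem splitRpowMajorant_eqOn_Ioc :
    EqOn (splitRpowMajorant l r M K) (fun t ↦ t ^ l * M ^ 2) (Ioc 0 r) :=
  fun _ ht ↦ if_pos ht.2

theorem splitRpowMajorant_eqOn_Ioi :
    EqOn (splitRpowMajorant l r M K) (fun t ↦ K ^ 2 * t ^ (l - 2)) (Ioi r) :=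
  fun _ ht ↦ if_neg (not_le.mpr ht)

theorem integrableOn_Ioc_splitRpowMajorant (hl : -1 < l) :
    IntegrableOn (splitRpowMajorant l r M K) (Ioc 0 r) :=
  IntegrableOn.congr_fun ((intervalIntegral.intervalIntegrable_rpow' hl).1.mul_const (M ^ 2))
    (splitRpowMajorant_eqOn_Ioc M K).symm measurableSet_Ioc

theorem integrableOn_Ioi_splitRpowMajorant (hl : l < 1) (hr : 0 < r) :
    IntegrableOn (splitRpowMajorant l r M K) (Ioi r) :=
  IntegrableOn.congr_fun
    ((integrableOn_Ioi_rpow_of_lt (a := l - 2) (by linarith) hr).const_mul (K ^ 2))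
    (splitRpowMajorant_eqOn_Ioi M K).symm measurableSet_Ioi

theorem integral_Ioi_zero_splitRpowMajorant (hl : l ∈ Ioo (-1) 1) (hr : 0 < r) :
    ∫ t in Ioi 0, splitRpowMajorant l r M K t =
      r ^ (1 + l) / (1 + l) * M ^ 2 + K ^ 2 / ((1 - l) * r ^ (1 - l)) := by
  obtain ⟨hl₀, hl₁⟩ := hl
  rw [← Ioc_union_Ioi_eq_Ioi hr.le, setIntegral_union (Ioc_disjoint_Ioi le_rfl)
      measurableSet_Ioi (integrableOn_Ioc_splitRpowMajorant M K hl₀)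
      (integrableOn_Ioi_splitRpowMajorant M K hl₁ hr),
    setIntegral_congr_fun measurableSet_Ioc (splitRpowMajorant_eqOn_Ioc M K),
    setIntegral_congr_fun measurableSet_Ioi (splitRpowMajorant_eqOn_Ioi M K),
    integral_mul_const, integral_const_mul, integral_Ioc_zero_rpow hl₀ hr.le,
    integral_Ioi_rpow_of_lt (by linarith) hr, show l - 2 + 1 = -(1 - l) by ring, rpow_neg hr.le]
  have : 1 - l ≠ 0 := by linarith
  have : 1 + l ≠ 0 := by linarith
  field_simp

theorem rpow_mul_sq_le_splitRpowMajorant {t y : ℝ} (ht : 0 ≤ t) (hy : 0 ≤ y) (hr : 0 < r)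
    (hM : y ≤ M) (hK : t * y ≤ K) : t ^ l * y ^ 2 ≤ splitRpowMajorant l r M K t := by
  by_cases htr : t ≤ r
  · rw [splitRpowMajorant, if_pos htr]
    gcongr
  · have ht₀ : 0 < t := hr.trans (not_le.mp htr)
    calc t ^ l * y ^ 2 = (t * y) ^ 2 * t ^ (l - 2) := by
          rw [rpow_sub ht₀, rpow_two]; field_simp
      _ ≤ K ^ 2 * t ^ (l - 2) := by gcongr
      _ = splitRpowMajorant l r M K t := by rw [splitRpowMajorant, if_neg htr]

end splitRpowMajorant

theorem integrable_rpow_abs_mul_norm_sq_and_integral_le {E : Type*} [NormedAddCommGroup E]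
    {f : ℝ → E} (hf : AEStronglyMeasurable f) {l r M K : ℝ} (hl : l ∈ Ioo (-1) 1) (hr : 0 < r)
    (hM : ∀ ξ, ‖f ξ‖ ≤ M) (hK : ∀ ξ, |ξ| * ‖f ξ‖ ≤ K) :
    Integrable (fun ξ ↦ |ξ| ^ l * ‖f ξ‖ ^ 2) ∧
      ∫ ξ, |ξ| ^ l * ‖f ξ‖ ^ 2 ≤
        2 * K ^ 2 / ((1 - l) * r ^ (1 - l)) + 2 * r ^ (1 + l) / (1 + l) * M ^ 2 := by
  have hle (ξ : ℝ) : |ξ| ^ l * ‖f ξ‖ ^ 2 ≤ splitRpowMajorant l r M K |ξ| :=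
    rpow_mul_sq_le_splitRpowMajorant M K (abs_nonneg ξ) (norm_nonneg _) hr (hM ξ) (hK ξ)
  have hmajorant : Integrable (fun ξ ↦ splitRpowMajorant l r M K |ξ|) := by
    refine integrable_comp_abs ?_
    rw [← Ioc_union_Ioi_eq_Ioi hr.le]
    exact (integrableOn_Ioc_splitRpowMajorant M K hl.1).union
      (integrableOn_Ioi_splitRpowMajorant M K hl.2 hr)
  have hint : Integrable (fun ξ ↦ |ξ| ^ l * ‖f ξ‖ ^ 2) := by
    refine hmajorant.mono' ?_ (ae_of_all _ fun ξ ↦ ?_)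
    · exact (continuous_abs.measurable.pow_const l).aestronglyMeasurable.mul (hf.norm.pow 2)
    · rw [Real.norm_of_nonneg (by positivity)]
      exact hle ξ
  refine ⟨hint, ?_⟩
  calc ∫ ξ, |ξ| ^ l * ‖f ξ‖ ^ 2 ≤ ∫ ξ, splitRpowMajorant l r M K |ξ| :=
        integral_mono hint hmajorant hle
    _ = 2 * ∫ t in Ioi 0, splitRpowMajorant l r M K t := integral_comp_abs
    _ = 2 * K ^ 2 / ((1 - l) * r ^ (1 - l)) + 2 * r ^ (1 + l) / (1 + l) * M ^ 2 := by
        rw [integral_Ioi_zero_splitRpowMajorant M K hl hr]; ring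

/-- frequency-splitting estimate for the `L¹ ∩ BV` part.  Let
`λ ∈ (0,1)` and `u ∈ L¹(ℝ) ∩ BV(ℝ)`.  Then for all `r > 0`,
`∫ |ξ|^λ ‖𝓕 u (ξ)‖² dξ ≤ (1/(2π²(1-λ) r^{1-λ})) |u|²_{BV} + (2 r^{1+λ}/(1+λ)) ‖u‖²_{L¹}`. -/
theorem frequency_splitting_L1BV_estimate
    (l : ℝ) (hl : l ∈ Set.Ioo (0 : ℝ) 1)
    (u : ℝ → ℝ)
    (hu1 : Integrable u)
    (huBV : eVariationOn u Set.univ ≠ ⊤)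
    (r : ℝ) (hr : 0 < r) :
    Integrable (fun ξ : ℝ =>
      |ξ| ^ l * ‖FourierTransform.fourier (fun x : ℝ => (u x : ℂ)) ξ‖ ^ 2) ∧
    (∫ ξ : ℝ, |ξ| ^ l * ‖FourierTransform.fourier (fun x : ℝ => (u x : ℂ)) ξ‖ ^ 2) ≤
      1 / (2 * Real.pi ^ 2 * (1 - l) * r ^ (1 - l)) *
          (eVariationOn u Set.univ).toReal ^ 2 +
        2 * r ^ (1 + l) / (1 + l) * (∫ x : ℝ, |u x|) ^ 2 := by
  obtain ⟨hl₀, hl₁⟩ := hl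
  have hbv : BoundedVariationOn u univ := huBV
  have hM (ξ : ℝ) : ‖𝓕 (fun x ↦ (u x : ℂ)) ξ‖ ≤ ∫ x, |u x| := by
    simpa using norm_fourier_le_integral_norm (fun x ↦ (u x : ℂ)) ξ
  have hK (ξ : ℝ) :
      |ξ| * ‖𝓕 (fun x ↦ (u x : ℂ)) ξ‖ ≤ (eVariationOn u univ).toReal / (2 * π) := by
    rw [le_div_iff₀ (by positivity)]
    linarith [hbv.two_mul_pi_mul_abs_mul_norm_fourier_le hu1 ξ]
  have hcont : Continuous (𝓕 (fun x ↦ (u x : ℂ))) :=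
    VectorFourier.fourierIntegral_continuous continuous_fourierChar (by fun_prop) hu1.ofReal
  obtain ⟨hint, hle⟩ := integrable_rpow_abs_mul_norm_sq_and_integral_le
    hcont.aestronglyMeasurable ⟨by linarith, hl₁⟩ hr hM hK
  refine ⟨hint, hle.trans_eq ?_⟩
  have : 1 - l ≠ 0 := by linarith
  field_simp
end
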